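/- arXiv:2511.18372 — 9 statements merged into one kernel-verified Lean document; each statement's English description precedes it below -/
import Mathlib

section
/- Let k be a field of characteristic p, where p ≥ 3 is a prime. Let A be a commutative k-algebra, let D : A → A be a k-linear derivation, let M be an A-module, and let f : M → M be a k-linear map satisfying f(a·m) = a·f(m) + D(a)·m for all a ∈ A and m ∈ M. Fix a ∈ A and define the k-linear maps g : M → M by g(m) = a·f(m) and E : A → A by E(b) = a·D(b). Then for all m ∈ M, g^p(m) = a^p·f^p(m) + E^{p-1}(a)·f(m), where powers denote p-fold (resp. (p-1)-fold) composition. -/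
open Finset

section Hoch

variable {k : Type*} [CommRing k]
variable {A : Type*} [CommRing A] [Algebra k A]

/-- coefficients in the expansion of `(a•f)^[n]`. -/
noncomputable def hochC (D : Derivation k A A) (a : A) : ℕ → ℕ → A
  | 0, j => if j = 0 then 1 else 0
  | n+1, 0 => a * D (hochC D a n 0)
  | n+1, j+1 => a * hochC D a n j + a * D (hochC D a n (j+1))

variable (D : Derivation k A A) (a : A)

theorem hochC_gt : ∀ n j, n < j → hochC D a n j = 0 := by
  intro n
  induction n with
  | zero => intro j hj; cases j with
    | zero => omega
    | succ j => simp [hochC]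
  | succ n ih =>
    intro j hj
    cases j with
    | zero => omega
    | succ j =>
      rw [hochC, ih (j+1) (by omega), ih j (by omega)]
      simp

theorem hochC_zero_right : ∀ n, 1 ≤ n → hochC D a n 0 = 0 := by
  intro n
  induction n with
  | zero => omega
  | succ n ih =>
    intro _
    cases n with
    | zero => simp [hochC]
    | succ n => rw [hochC, ih (by omega)]; simp

theorem hochC_diag : ∀ n, hochC D a n n = a ^ n := by
  intro n
  induction n with
  | zero => simp [hochC]
  | succ n ih =>
    rw [hochC, ih, hochC_gt D a n (n+1) (by omega)]
    ring_nf
    simp [pow_succ, mul_comm]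

theorem hochC_one : ∀ n, hochC D a (n+1) 1 = (fun b => a * D b)^[n] a := by
  intro n
  induction n with
  | zero => simp [hochC]
  | succ n ih =>
    rw [hochC, hochC_zero_right D a (n+1) (by omega), Function.iterate_succ_apply', ← ih]
    simp

end Hoch

section Leib

variable {k : Type*} [CommRing k]
variable {A : Type*} [CommRing A] [Algebra k A]

theorem iterate_leibniz (d : Derivation k A A) (x y : A) :
    ∀ n, (⇑d)^[n] (x * y) =
      ∑ i ∈ range (n+1), n.choose i • ((⇑d)^[i] x * (⇑d)^[n-i] y) := by
  intro n
  induction n with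
  | zero => simp
  | succ n ih =>
    rw [Function.iterate_succ_apply', ih, map_sum]
    have step : ∀ i ∈ range (n+1),
        d (n.choose i • ((⇑d)^[i] x * (⇑d)^[n-i] y)) =
          n.choose i • ((⇑d)^[i] x * (⇑d)^[n+1-i] y)
          + n.choose i • ((⇑d)^[i+1] x * (⇑d)^[n-i] y) := by
      intro i hi
      rw [mem_range] at hi
      rw [map_nsmul, Derivation.leibniz, smul_eq_mul, smul_eq_mul,
        ← Function.iterate_succ_apply' d i x, ← Function.iterate_succ_apply' d (n-i) y,
        smul_add]
      have h1 : (n - i).succ = n + 1 - i := by omega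
      have h2 : i.succ = i + 1 := rfl
      rw [h1, h2, mul_comm ((⇑d)^[n-i] y)]
    rw [sum_congr rfl step, sum_add_distrib]
    -- LHS now: S1 + S2 where
    -- S1 = ∑ i in range (n+1), C(n,i) • (d^[i] x * d^[n+1-i] y)
    -- S2 = ∑ i in range (n+1), C(n,i) • (d^[i+1] x * d^[n-i] y)
    -- target: ∑ i in range (n+2), C(n+1,i) • (d^[i] x * d^[n+1-i] y)
    rw [Finset.sum_range_succ' (fun i => (n+1).choose i • ((⇑d)^[i] x * (⇑d)^[n+1-i] y)) (n+1)]
    rw [Finset.sum_range_succ' (fun i => n.choose i • ((⇑d)^[i] x * (⇑d)^[n+1-i] y)) n]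
    have e1 : ∀ i, (n+1).choose (i+1) = n.choose i + n.choose (i+1) := by
      intro i; rw [Nat.choose_succ_succ]
    have e2 : ∀ i, n + 1 - (i+1) = n - i := fun i => by omega
    simp only [e1, e2, add_smul, Nat.choose_zero_right, one_smul]
    rw [sum_add_distrib]
    have e3 : ∑ i ∈ range (n+1), n.choose (i+1) • ((⇑d)^[i+1] x * (⇑d)^[n-i] y)
        = ∑ i ∈ range n, n.choose (i+1) • ((⇑d)^[i+1] x * (⇑d)^[n-i] y) := by
      rw [Finset.sum_range_succ, Nat.choose_succ_self, zero_smul, add_zero]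
    rw [e3]
    abel

end Leib

section Expand

variable {k : Type*} [CommRing k]
variable {A : Type*} [CommRing A] [Algebra k A]
variable {M : Type*} [AddCommGroup M] [Module k M] [Module A M] [IsScalarTower k A M]

theorem hoch_expand (D : Derivation k A A) (f : M →ₗ[k] M)
    (hf : ∀ (a : A) (m : M), f (a • m) = a • f m + D a • m) (a : A) (m : M) :
    ∀ n, (fun m => a • f m)^[n] m =
      ∑ j ∈ range (n+1), hochC D a n j • (⇑f)^[j] m := by
  intro n
  induction n with
  | zero => simp [hochC]
  | succ n ih =>
    rw [Function.iterate_succ_apply', ih]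
    show a • f _ = _
    rw [map_sum]
    have step : ∀ j ∈ range (n+1),
        f (hochC D a n j • (⇑f)^[j] m) =
          hochC D a n j • (⇑f)^[j+1] m + D (hochC D a n j) • (⇑f)^[j] m := by
      intro j _
      rw [hf, Function.iterate_succ_apply']
    rw [sum_congr rfl step, smul_sum]
    have step2 : ∀ j ∈ range (n+1),
        a • (hochC D a n j • (⇑f)^[j+1] m + D (hochC D a n j) • (⇑f)^[j] m) =
          (a * hochC D a n j) • (⇑f)^[j+1] m + (a * D (hochC D a n j)) • (⇑f)^[j] m := by
      intro j _
      rw [smul_add, smul_smul, smul_smul]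
    rw [sum_congr rfl step2, sum_add_distrib]
    -- target : ∑ j in range (n+2), hochC D a (n+1) j • f^[j] m
    rw [Finset.sum_range_succ' (fun j => hochC D a (n+1) j • (⇑f)^[j] m) (n+1)]
    have e1 : ∀ j, hochC D a (n+1) (j+1) = a * hochC D a n j + a * D (hochC D a n (j+1)) :=
      fun j => rfl
    have e0 : hochC D a (n+1) 0 = a * D (hochC D a n 0) := rfl
    simp only [e1, e0, add_smul]
    rw [sum_add_distrib]
    have e3 : ∑ j ∈ range (n+1), (a * D (hochC D a n (j+1))) • (⇑f)^[j+1] m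
        = ∑ j ∈ range n, (a * D (hochC D a n (j+1))) • (⇑f)^[j+1] m := by
      rw [Finset.sum_range_succ, hochC_gt D a n (n+1) (by omega)]
      simp
    have e4 : ∑ j ∈ range (n+1), (a * D (hochC D a n j)) • (⇑f)^[j] m
        = ∑ j ∈ range n, (a * D (hochC D a n (j+1))) • (⇑f)^[j+1] m
          + (a * D (hochC D a n 0)) • (⇑f)^[0] m := by
      rw [Finset.sum_range_succ' (fun j => (a * D (hochC D a n j)) • (⇑f)^[j] m) n]
    rw [e3, e4]
    abel

end Expand

section Transfer

variable {k : Type*} [CommRing k]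
variable {A B : Type*} [CommRing A] [Algebra k A] [CommRing B] [Algebra k B]

theorem hochC_map (DA : Derivation k A A) (DB : Derivation k B B) (φ : A →ₐ[k] B)
    (hφ : ∀ x, φ (DA x) = DB (φ x)) (a : A) :
    ∀ n j, φ (hochC DA a n j) = hochC DB (φ a) n j := by
  intro n
  induction n with
  | zero =>
    intro j
    by_cases h : j = 0 <;> simp [hochC, h]
  | succ n ih =>
    intro j
    cases j with
    | zero => show φ (a * DA _) = _; rw [map_mul, hφ, ih]; rfl
    | succ j =>
      show φ (a * hochC DA a n j + a * DA (hochC DA a n (j+1))) = _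
      rw [map_add, map_mul, map_mul, hφ, ih, ih]
      rfl

/-- an algebra hom out of `MvPolynomial` commutes with derivations if it does so on
generators. -/
theorem deriv_comm {σ : Type*} (D₀ : Derivation k (MvPolynomial σ k) (MvPolynomial σ k))
    (DA : Derivation k A A) (φ : MvPolynomial σ k →ₐ[k] A)
    (h : ∀ i, φ (D₀ (MvPolynomial.X i)) = DA (φ (MvPolynomial.X i))) :
    ∀ x, φ (D₀ x) = DA (φ x) := by
  intro x
  induction x using MvPolynomial.induction_on with
  | C r =>
    rw [MvPolynomial.derivation_C, map_zero, ← MvPolynomial.algebraMap_eq,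
      AlgHom.commutes, Derivation.map_algebraMap]
  | add p q hp hq => rw [map_add, map_add, hp, hq, map_add, map_add]
  | mul_X p i hp =>
    rw [Derivation.leibniz, map_add, smul_eq_mul, smul_eq_mul, map_mul, map_mul, map_mul,
      Derivation.leibniz, smul_eq_mul, smul_eq_mul, hp, h]

end Transfer

section CharPHelp

theorem nsmul_eq_zero_of_cast {k B : Type*} [CommRing k] [CommRing B] [Algebra k B]
    (n : ℕ) (h : (n : k) = 0) (x : B) : n • x = 0 := by
  rw [nsmul_eq_mul, ← map_natCast (algebraMap k B), h, map_zero, zero_mul]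

theorem eq_zero_of_nsmul {k B : Type*} [Field k] [CommRing B] [Algebra k B]
    (n : ℕ) (h : (n : k) ≠ 0) (x : B) (hx : n • x = 0) : x = 0 := by
  have h2 : (n : k) • x = 0 := by
    rw [Algebra.smul_def, map_natCast, ← nsmul_eq_mul, hx]
  calc x = ((n:k)⁻¹ * (n:k)) • x := by rw [inv_mul_cancel₀ h, one_smul]
  _ = (n:k)⁻¹ • ((n:k) • x) := by rw [mul_smul]
  _ = 0 := by rw [h2, smul_zero]

end CharPHelp

section Univ

open MvPolynomial

variable (k : Type*) [CommRing k]

/-- the shift derivation on `k[x₀,x₁,…]`. -/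
noncomputable def D0 : Derivation k (MvPolynomial ℕ k) (MvPolynomial ℕ k) :=
  mkDerivation k (fun i => X (i+1))

/-- the shift derivation on three chains of variables. -/
noncomputable def D3 : Derivation k (MvPolynomial (Fin 3 × ℕ) k) (MvPolynomial (Fin 3 × ℕ) k) :=
  mkDerivation k (fun q => X (q.1, q.2 + 1))

@[simp] theorem D0_X (i : ℕ) : D0 k (X i) = X (i+1) := mkDerivation_X _ _ _

@[simp] theorem D3_X (t : Fin 3) (s : ℕ) : D3 k (X (t, s)) = X (t, s+1) := mkDerivation_X _ _ _

theorem D3_iter (t : Fin 3) (s : ℕ) : ∀ i, (⇑(D3 k))^[i] (X (t, s)) = X (t, s+i) := by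
  intro i
  induction i with
  | zero => rfl
  | succ i ih => rw [Function.iterate_succ_apply', ih, D3_X, ← add_assoc]

/-- specialization map killing chains 1 and 2 except one variable each. -/
noncomputable def nu (j0 : ℕ) : Fin 3 × ℕ → MvPolynomial ℕ k := fun q =>
  if q.1.val = 0 then X q.2
  else if q.1.val = 1 then (if q.2 = 1 then 1 else 0)
  else (if q.2 = j0 - 1 then 1 else 0)

@[simp] theorem nu_0 (j0 s : ℕ) : nu k j0 ((0 : Fin 3), s) = X s := by simp [nu]
@[simp] theorem nu_1 (j0 s : ℕ) : nu k j0 ((1 : Fin 3), s) = if s = 1 then 1 else 0 := by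
  simp [nu]
@[simp] theorem nu_2 (j0 s : ℕ) : nu k j0 ((2 : Fin 3), s) = if s = j0 - 1 then 1 else 0 := by
  simp [nu]

end Univ

section UnivMain

open MvPolynomial Finset

variable {k : Type*} [Field k] {p : ℕ}

theorem hochC_univ (hp : p.Prime) [CharP k p] {j0 : ℕ} (h1 : 1 < j0) (h2 : j0 < p) :
    hochC (D0 k) (X 0) p j0 = 0 := by
  classical
  set R' := MvPolynomial (Fin 3 × ℕ) k with hR'
  set a' : R' := X ((0 : Fin 3), 0) with ha'
  set y : R' := X ((1 : Fin 3), 0) with hy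
  set z : R' := X ((2 : Fin 3), 0) with hz
  set χ : MvPolynomial ℕ k →ₐ[k] R' := aeval (fun i => X ((0 : Fin 3), i)) with hχdef
  set ψ : R' →ₐ[k] MvPolynomial ℕ k := aeval (nu k j0) with hψdef
  -- χ commutes with the derivations
  have hχcomm : ∀ x, χ (D0 k x) = D3 k (χ x) := by
    apply deriv_comm
    intro i
    simp only [hχdef, D0_X, aeval_X]
    exact (D3_X k 0 i).symm
  -- hochC transfers along χ
  have hc : ∀ j, χ (hochC (D0 k) (X 0) p j) = hochC (D3 k) a' p j := by
    intro j
    rw [hochC_map (D0 k) (D3 k) χ hχcomm]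
    simp [hχdef, ha']
  -- ψ ∘ χ = id
  have hψχ : ∀ x, ψ (χ x) = x := by
    have : ψ.comp χ = AlgHom.id k (MvPolynomial ℕ k) := by
      apply MvPolynomial.algHom_ext
      intro i
      simp only [hψdef, hχdef, AlgHom.coe_comp, Function.comp_apply, aeval_X, AlgHom.coe_id,
        id_eq]
      rw [aeval_X, nu_0]
    intro x
    calc ψ (χ x) = (ψ.comp χ) x := rfl
    _ = x := by rw [this]; rfl
  -- the derivation θ = a' • D3
  set θ : Derivation k R' R' := a' • D3 k with hθdef
  have hθ : ∀ m, θ m = a' • (D3 k) m := by intro m; simp [hθdef]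
  -- expansion of θ^[n]
  have hexp : ∀ m : R', (⇑θ)^[p] m = ∑ j ∈ range (p+1), hochC (D3 k) a' p j • (⇑(D3 k))^[j] m := by
    intro m
    have hfun : ⇑θ = (fun m : R' => a' • (D3 k).toLinearMap m) := by
      funext m; rw [hθ]; rfl
    have hD : ⇑((D3 k).toLinearMap) = ⇑(D3 k) := rfl
    rw [hfun, hoch_expand (D3 k) (D3 k).toLinearMap ?_ a' m p, hD]
    intro a m
    show (D3 k) (a • m) = a • (D3 k) m + (D3 k) a • m
    simp only [smul_eq_mul]
    rw [Derivation.leibniz]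
    simp only [smul_eq_mul]
    ring
  -- char p Leibniz for θ
  have E2 : (⇑θ)^[p] (y * z) = (⇑θ)^[p] y * z + y * (⇑θ)^[p] z := by
    rw [iterate_leibniz θ y z p]
    rw [← Finset.sum_subset (s₁ := ({0, p} : Finset ℕ)) ?_ ?_]
    · rw [Finset.sum_pair (by omega : (0:ℕ) ≠ p)]
      simp [Nat.sub_self, add_comm]
    · intro i hi
      simp only [mem_insert, mem_singleton, mem_range] at hi ⊢
      omega
    · intro i hi hni
      simp only [mem_insert, mem_singleton, mem_range] at hi hni
      have hdvd : p ∣ p.choose i := hp.dvd_choose_self (by omega) (by omega)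
      apply nsmul_eq_zero_of_cast (k := k)
      obtain ⟨c, hc⟩ := hdvd
      rw [hc, Nat.cast_mul, CharP.cast_eq_zero, zero_mul]
  -- the master equation
  have star : ∑ j ∈ range (p+1), hochC (D3 k) a' p j • (⇑(D3 k))^[j] (y*z)
      = (∑ j ∈ range (p+1), hochC (D3 k) a' p j • (⇑(D3 k))^[j] y) * z
        + y * (∑ j ∈ range (p+1), hochC (D3 k) a' p j • (⇑(D3 k))^[j] z) := by
    rw [← hexp, ← hexp, ← hexp, E2]
  -- inner sums after specialization
  have hTj : ∀ j : ℕ, (∑ i ∈ range (j+1), j.choose i •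
        ((if i = 1 then (1 : MvPolynomial ℕ k) else 0) * (if j - i = j0 - 1 then 1 else 0)))
      = if j = j0 then j0 • (1 : MvPolynomial ℕ k) else 0 := by
    intro j
    by_cases hjj : j = j0
    · subst hjj
      rw [if_pos rfl, Finset.sum_eq_single 1]
      · rw [if_pos rfl, one_mul, if_pos rfl, Nat.choose_one_right]
      · intro i _ hne
        rw [if_neg hne, zero_mul, smul_zero]
      · intro h; exact absurd (mem_range.mpr (by omega)) h
    · rw [if_neg hjj]
      apply Finset.sum_eq_zero
      intro i hi
      rw [mem_range] at hi
      by_cases hi1 : i = 1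
      · subst hi1
        have hne : j - 1 ≠ j0 - 1 := by omega
        rw [if_neg hne, mul_zero, smul_zero]
      · rw [if_neg hi1, zero_mul, smul_zero]
  -- ψ applied to each term of the LHS
  have hterm : ∀ j ∈ range (p+1), ψ (hochC (D3 k) a' p j • (⇑(D3 k))^[j] (y*z))
      = if j = j0 then j0 • hochC (D0 k) (X 0) p j0 else 0 := by
    intro j _
    rw [smul_eq_mul, map_mul, ← hc j, hψχ]
    rw [iterate_leibniz (D3 k) y z j, map_sum]
    have hinner : ∀ i ∈ range (j+1),
        ψ (j.choose i • ((⇑(D3 k))^[i] y * (⇑(D3 k))^[j-i] z)) = j.choose i •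
          ((if i = 1 then (1 : MvPolynomial ℕ k) else 0) * (if j - i = j0 - 1 then 1 else 0)) := by
      intro i _
      rw [map_nsmul, map_mul, hy, hz, D3_iter k 1 0 i, D3_iter k 2 0 (j-i), zero_add, zero_add]
      rw [hψdef, aeval_X, aeval_X, nu_1, nu_2]
    rw [sum_congr rfl hinner, hTj j]
    by_cases hjj : j = j0
    · rw [if_pos hjj, if_pos hjj, hjj, nsmul_eq_mul, nsmul_eq_mul, mul_one, mul_comm]
    · rw [if_neg hjj, if_neg hjj, mul_zero]
  have hy0 : ψ y = 0 := by
    rw [hy, hψdef, aeval_X, nu_1, if_neg (by omega)]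
  have hz0 : ψ z = 0 := by
    rw [hz, hψdef, aeval_X, nu_2, if_neg (by omega)]
  have h0 : j0 • hochC (D0 k) (X 0) p j0 = 0 := by
    have hstar := congrArg ψ star
    rw [map_add, map_mul, map_mul, hy0, hz0, mul_zero, zero_mul, add_zero] at hstar
    rw [map_sum, Finset.sum_congr rfl hterm, Finset.sum_ite_eq' (range (p+1)) j0
      (fun _ => j0 • hochC (D0 k) (X 0) p j0), if_pos (mem_range.mpr (by omega))] at hstar
    exact hstar
  have hne : (j0 : k) ≠ 0 := by
    intro h0'
    have hdvd := (CharP.cast_eq_zero_iff k p j0).mp h0'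
    have := Nat.le_of_dvd (by omega) hdvd
    omega
  exact eq_zero_of_nsmul j0 hne _ h0

end UnivMain

/-- Even case of the superized Hochschild lemma: for a commutative `k`-algebra `A`
(char `p ≥ 3`), a derivation `D : A → A`, an `A`-module `M` and a `k`-linear `f : M → M`
with `f (a • m) = a • f m + D a • m`, setting `g m = a • f m` and `E b = a • D b`,
we get `g^[p] m = a^p • f^[p] m + (E^[p-1] a) • f m`. -/
theorem stmt0 {k : Type*} [Field k] {p : ℕ} (hp : p.Prime) (hp3 : 3 ≤ p) [CharP k p]
    {A : Type*} [CommRing A] [Algebra k A]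
    {M : Type*} [AddCommGroup M] [Module k M] [Module A M] [IsScalarTower k A M]
    (D : Derivation k A A) (f : M →ₗ[k] M)
    (hf : ∀ (a : A) (m : M), f (a • m) = a • f m + D a • m)
    (a : A) (g : M → M) (hg : ∀ m, g m = a • f m)
    (E : A → A) (hE : ∀ b, E b = a * D b) :
    ∀ m : M, g^[p] m = a ^ p • (⇑f)^[p] m + E^[p - 1] a • f m := by
  classical
  intro m
  open MvPolynomial Finset in
  -- transfer of the universal vanishing
  have hvan : ∀ j, 1 < j → j < p → hochC D a p j = 0 := by
    set φ : MvPolynomial ℕ k →ₐ[k] A := MvPolynomial.aeval (fun i => (⇑D)^[i] a) with hφdef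
    have hφcomm : ∀ x, φ (D0 k x) = D (φ x) := by
      apply deriv_comm
      intro i
      rw [D0_X, hφdef, MvPolynomial.aeval_X, MvPolynomial.aeval_X,
        ← Function.iterate_succ_apply' D i a]
    have hφa : φ (MvPolynomial.X 0) = a := by rw [hφdef, MvPolynomial.aeval_X]; rfl
    intro j hj1 hj2
    calc hochC D a p j = φ (hochC (D0 k) (MvPolynomial.X 0) p j) := by
          rw [hochC_map (D0 k) D φ hφcomm, hφa]
    _ = 0 := by rw [hochC_univ hp hj1 hj2, map_zero]
  have hgfun : g = fun m => a • f m := funext hg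
  have hEfun : E = fun b => a * D b := funext hE
  rw [hgfun, hoch_expand D f hf a m p]
  rw [← Finset.sum_subset (s₁ := ({1, p} : Finset ℕ)) ?_ ?_]
  · rw [Finset.sum_pair (by omega : (1:ℕ) ≠ p)]
    have e1 : hochC D a p 1 = E^[p-1] a := by
      obtain ⟨q, hq⟩ : ∃ q, p = q + 1 := ⟨p - 1, by omega⟩
      subst hq
      rw [hochC_one D a q, hEfun]
      simp
    rw [e1, hochC_diag D a p, Function.iterate_one, add_comm]
  · intro i hi
    simp only [Finset.mem_insert, Finset.mem_singleton, Finset.mem_range] at hi ⊢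
    omega
  · intro j hj hnj
    simp only [Finset.mem_insert, Finset.mem_singleton, Finset.mem_range] at hj hnj
    rcases Nat.eq_zero_or_pos j with h0 | hpos
    · subst h0
      rw [hochC_zero_right D a p (by omega), zero_smul]
    · rw [hvan j (by omega) (by omega), zero_smul]
end

section
/- Let R be a commutative ring, L a Lie algebra over R, M an R-module, and φ : L → End_R(M) an R-linear Lie algebra homomorphism. Fix x, y ∈ L and v, w ∈ M, and define sequences (y_n) in L and (m_n) in M by y_0 = y, m_0 = w, y_{n+1} = [x, y_n], and m_{n+1} = φ(x)(m_n) − φ(y_n)(v). Then for every n ∈ ℕ, y_n = (ad x)^n(y) and m_n = φ(x)^n(w) + Σ_{k=1}^{n} (-1)^k · C(n,k) · φ(x)^{n-k}( φ(y)( φ(x)^{k-1}(v) ) ). -/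
/-!
Writing `a = φ x` and `b = φ y`, `φ` turns `(ad x)^n y` into `(ad a)^n b`, which the binomial
theorem for the commuting operators `mulLeft a` and `- mulRight a` expands as
`∑ (-1)^j C(n,j) a^(n-j) b a^j`. The `M`-component is then `a^n w + S_n v` with
`S_n = ∑_{k=1}^n (-1)^k C(n,k) a^(n-k) b a^(k-1)`, since Pascal's rule gives the recursion
`S_(n+1) = a S_n - (ad a)^n b` matching `m_(n+1) = a m_n - φ(y_n) v`.
-/

open Finset

attribute [local instance 100] LieRing.ofAssociativeRing

theorem sum_Icc_one_eq_sum_range {M : Type*} [AddCommMonoid M] (f : ℕ → M) (n : ℕ) :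
    ∑ k ∈ Icc 1 n, f k = ∑ j ∈ range n, f (j + 1) := by
  rw [range_eq_Ico, sum_Ico_add' f 0 n 1, Ico_add_one_right_eq_Icc, zero_add]

theorem LieHom.map_ad_pow_apply {R L L' : Type*} [CommRing R] [LieRing L] [LieAlgebra R L]
    [LieRing L'] [LieAlgebra R L'] (f : L →ₗ⁅R⁆ L') (x y : L) (n : ℕ) :
    f ((LieAlgebra.ad R L x ^ n) y) = (LieAlgebra.ad R L' (f x) ^ n) (f y) := by
  induction n with
  | zero => rfl
  | succ n ih => simp only [pow_succ', Module.End.mul_apply, LieAlgebra.ad_apply, map_lie, ih]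

theorem LieAlgebra.ad_pow_apply_eq_sum {R A : Type*} [CommRing R] [Ring A] [Algebra R A]
    (a b : A) (n : ℕ) :
    (ad R A a ^ n) b =
      ∑ j ∈ range (n + 1), ((-1 : ℤ) ^ j * (n.choose j : ℤ)) • (a ^ (n - j) * b * a ^ j) := by
  have hcomm : Commute (-LinearMap.mulRight R a) (LinearMap.mulLeft R a) :=
    (LinearMap.commute_mulLeft_right a a).symm.neg_left
  rw [ad_eq_lmul_left_sub_lmul_right, Pi.sub_apply, sub_eq_neg_add, hcomm.add_pow,
    LinearMap.sum_apply]
  refine sum_congr rfl fun j _ => ?_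
  have hsign : (-1 : Module.End R A) ^ j = (((-1 : ℤ) ^ j : ℤ) : Module.End R A) := by
    push_cast; rfl
  rw [neg_pow, hsign]
  simp only [LinearMap.pow_mulLeft, LinearMap.pow_mulRight, Module.End.mul_apply,
    Module.End.natCast_apply, Module.End.intCast_apply, LinearMap.mulLeft_apply,
    LinearMap.mulRight_apply]
  rw [mul_smul, ← natCast_zsmul, mul_smul_comm, smul_mul_assoc]

section AdPowTail

variable {A : Type*} [Ring A]

-- A formal quotient: `adPowTail a b n * a = (ad a)^n b - a^n * b`.
def adPowTail (a b : A) (n : ℕ) : A :=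
  ∑ k ∈ Icc 1 n, ((-1 : ℤ) ^ k * (n.choose k : ℤ)) • (a ^ (n - k) * b * a ^ (k - 1))

theorem adPowTail_succ (a b : A) (n : ℕ) :
    adPowTail a b (n + 1) = a * adPowTail a b n -
      ∑ j ∈ range (n + 1), ((-1 : ℤ) ^ j * (n.choose j : ℤ)) • (a ^ (n - j) * b * a ^ j) := by
  have pascal : ∀ j ∈ range (n + 1),
      ((-1 : ℤ) ^ (j + 1) * ((n + 1).choose (j + 1) : ℤ)) •
          (a ^ (n + 1 - (j + 1)) * b * a ^ (j + 1 - 1)) =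
        ((-1 : ℤ) ^ (j + 1) * (n.choose (j + 1) : ℤ)) • (a ^ (n - j) * b * a ^ j) -
          ((-1 : ℤ) ^ j * (n.choose j : ℤ)) • (a ^ (n - j) * b * a ^ j) := by
    intro j _
    rw [Nat.add_sub_add_right, Nat.add_sub_cancel, Nat.choose_succ_succ', ← sub_smul]
    congr 1
    push_cast
    ring
  have shift : a * adPowTail a b n = ∑ j ∈ range (n + 1),
      ((-1 : ℤ) ^ (j + 1) * (n.choose (j + 1) : ℤ)) • (a ^ (n - j) * b * a ^ j) := by
    rw [sum_range_succ, Nat.choose_succ_self, Nat.cast_zero, mul_zero, zero_smul, add_zero,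
      adPowTail, sum_Icc_one_eq_sum_range, mul_sum]
    refine sum_congr rfl fun j hj => ?_
    have hjn := mem_range.mp hj
    rw [mul_smul_comm, ← mul_assoc, ← mul_assoc, ← pow_succ', Nat.add_sub_cancel,
      show n - (j + 1) + 1 = n - j by omega]
  rw [adPowTail, sum_Icc_one_eq_sum_range, sum_congr rfl pascal, sum_sub_distrib, shift]

end AdPowTail

/-- Componentwise formula for the iterated adjoint action in the semidirect product
`L ⋉ M`: with `y_0 = y`, `m_0 = w`, `y_{n+1} = ⁅x, y_n⁆`, `m_{n+1} = φ x (m_n) − φ (y_n) v`,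
we have `y_n = (ad x)^n y` and
`m_n = φ(x)^n w + ∑_{k=1}^n (-1)^k C(n,k) • φ(x)^{n-k} (φ(y) (φ(x)^{k-1} v))`. -/
theorem stmt2 {R : Type*} [CommRing R] {L : Type*} [LieRing L] [LieAlgebra R L]
    {M : Type*} [AddCommGroup M] [Module R M]
    (φ : L →ₗ⁅R⁆ Module.End R M)
    (x y : L) (v w : M) (ys : ℕ → L) (ms : ℕ → M)
    (hy0 : ys 0 = y) (hm0 : ms 0 = w)
    (hys : ∀ n, ys (n + 1) = ⁅x, ys n⁆)
    (hms : ∀ n, ms (n + 1) = φ x (ms n) - φ (ys n) v) :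
    ∀ n : ℕ, ys n = (LieAlgebra.ad R L x ^ n) y ∧
      ms n = (φ x ^ n) w + ∑ k ∈ Finset.Icc 1 n,
        ((-1 : ℤ) ^ k * (n.choose k : ℤ)) • (φ x ^ (n - k)) (φ y ((φ x ^ (k - 1)) v)) := by
  have hY : ∀ n, ys n = (LieAlgebra.ad R L x ^ n) y := by
    intro n
    induction n with
    | zero => exact hy0
    | succ n ih => rw [hys, ih, pow_succ', Module.End.mul_apply, LieAlgebra.ad_apply]
  have hM : ∀ n, ms n = (φ x ^ n) w + adPowTail (φ x) (φ y) n v := by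
    intro n
    induction n with
    | zero => simp [hm0, adPowTail]
    | succ n ih =>
      rw [hms, ih, hY, φ.map_ad_pow_apply, LieAlgebra.ad_pow_apply_eq_sum, adPowTail_succ,
        pow_succ', LinearMap.sub_apply, Module.End.mul_apply, Module.End.mul_apply, map_add,
        add_sub_assoc]
  intro n
  refine ⟨hY n, ?_⟩
  simp only [hM, adPowTail, LinearMap.sum_apply, LinearMap.smul_apply, Module.End.mul_apply]
end

section
/- Let k be a field of characteristic p, where p ≥ 3 is a prime, L a Lie algebra over k, M a k-vector space, and φ : L → End_k(M) a k-linear Lie algebra homomorphism. Fix x, y ∈ L and v, w ∈ M, and define sequences (y_n) in L and (m_n) in M by y_0 = y, m_0 = w, y_{n+1} = [x, y_n], and m_{n+1} = φ(x)(m_n) − φ(y_n)(v). Then m_p = φ(x)^p(w) − φ(y)( φ(x)^{p-1}(v) ) and y_p = (ad x)^p(y). -/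
/-!
The map `(B, w) ↦ ((m, t) ↦ (B m + t • w, 0))` embeds the semidirect product `End M ⋉ M` into
the associative algebra `End (M × k)` and turns its bracket into the commutator. Hence
`(φ (y_n), m_n)` is `(ad X)^n T` for `X = (φ x, v)` and `T = (φ y, w)`. In characteristic `p`
left and right multiplication by `X` commute, so `(ad X)^p = ad (X^p)`, and
`X^p = (φ(x)^p, φ(x)^(p-1) v)` is computed directly.
-/

attribute [local instance 100] LieRing.ofAssociativeRing

open LinearMap LieAlgebra

theorem LieAlgebra.ad_pow_expChar {R A : Type*} [CommRing R] [Ring A] [Algebra R A]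
    (p : ℕ) [ExpChar A p] (a : A) : ad R A a ^ p = ad R A (a ^ p) := by
  have : ExpChar (Module.End R A) p :=
    expChar_of_injective_ringHom (f := (Algebra.lmul R A).toRingHom) Algebra.lmul_injective p
  rw [ad_eq_lmul_left_sub_lmul_right, Pi.sub_apply,
    sub_pow_expChar_of_commute p (commute_mulLeft_right a a), pow_mulLeft, pow_mulRight]
  rfl

section affineEnd

variable {k M : Type*} [CommRing k] [AddCommGroup M] [Module k M]

def affineEnd (B : Module.End k M) (w : M) : Module.End k (M × k) :=
  inl k M k ∘ₗ B.coprod (toSpanSingleton k M w)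

@[simp]
theorem affineEnd_apply (B : Module.End k M) (w : M) (z : M × k) :
    affineEnd B w z = (B z.1 + z.2 • w, 0) := rfl

theorem affineEnd_inj {B B' : Module.End k M} {w w' : M} :
    affineEnd B w = affineEnd B' w' ↔ B = B' ∧ w = w' := by
  refine ⟨fun h ↦ ⟨LinearMap.ext fun m ↦ ?_, ?_⟩, fun h ↦ h.1 ▸ h.2 ▸ rfl⟩
  · simpa using congr_arg Prod.fst (LinearMap.congr_fun h (m, 0))
  · simpa using congr_arg Prod.fst (LinearMap.congr_fun h (0, 1))

theorem affineEnd_mul_affineEnd (A B : Module.End k M) (v w : M) :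
    affineEnd A v * affineEnd B w = affineEnd (A * B) (A w) := by
  ext z <;> simp

theorem affineEnd_sub_affineEnd (A B : Module.End k M) (v w : M) :
    affineEnd A v - affineEnd B w = affineEnd (A - B) (v - w) := by
  ext z <;> simp [smul_sub]

theorem lie_affineEnd_affineEnd (A B : Module.End k M) (v w : M) :
    ⁅affineEnd A v, affineEnd B w⁆ = affineEnd ⁅A, B⁆ (A w - B v) := by
  rw [Ring.lie_def, Ring.lie_def, affineEnd_mul_affineEnd, affineEnd_mul_affineEnd,
    affineEnd_sub_affineEnd]

theorem affineEnd_pow_succ (A : Module.End k M) (v : M) (n : ℕ) :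
    affineEnd A v ^ (n + 1) = affineEnd (A ^ (n + 1)) ((A ^ n) v) := by
  induction n with
  | zero => simp
  | succ n ih =>
    rw [pow_succ', ih, affineEnd_mul_affineEnd, ← pow_succ', ← Module.End.mul_apply, ← pow_succ']

end affineEnd

theorem affineEnd_eq_ad_pow {k L M : Type*} [CommRing k] [LieRing L] [LieAlgebra k L]
    [AddCommGroup M] [Module k M] (φ : L →ₗ⁅k⁆ Module.End k M) (x : L) (v : M)
    (ys : ℕ → L) (ms : ℕ → M) (hys : ∀ n, ys (n + 1) = ⁅x, ys n⁆)
    (hms : ∀ n, ms (n + 1) = φ x (ms n) - φ (ys n) v) (n : ℕ) :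
    affineEnd (φ (ys n)) (ms n) =
      (ad k _ (affineEnd (φ x) v) ^ n) (affineEnd (φ (ys 0)) (ms 0)) := by
  induction n with
  | zero => rfl
  | succ n ih =>
    rw [pow_succ', Module.End.mul_apply, ← ih, ad_apply, lie_affineEnd_affineEnd, hys,
      LieHom.map_lie, hms]

theorem stmt3_general {k : Type*} [Field k] {p : ℕ} (hp : p.Prime) [CharP k p]
    {L : Type*} [LieRing L] [LieAlgebra k L]
    {M : Type*} [AddCommGroup M] [Module k M]
    (φ : L →ₗ⁅k⁆ Module.End k M)
    (x y : L) (v w : M) (ys : ℕ → L) (ms : ℕ → M)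
    (hy0 : ys 0 = y) (hm0 : ms 0 = w)
    (hys : ∀ n, ys (n + 1) = ⁅x, ys n⁆)
    (hms : ∀ n, ms (n + 1) = φ x (ms n) - φ (ys n) v) :
    ms p = (φ x ^ p) w - φ y ((φ x ^ (p - 1)) v) ∧
      ys p = (LieAlgebra.ad k L x ^ p) y := by
  have : Fact p.Prime := ⟨hp⟩
  have : ExpChar (Module.End k (M × k)) p :=
    expChar_of_injective_algebraMap (algebraMap k _).injective p
  constructor
  · have h := affineEnd_eq_ad_pow φ x v ys ms hys hms p
    obtain ⟨q, rfl⟩ : ∃ q, p = q + 1 := Nat.exists_eq_succ_of_ne_zero hp.ne_zero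
    rw [ad_pow_expChar, ad_apply, affineEnd_pow_succ, lie_affineEnd_affineEnd, affineEnd_inj,
      hy0, hm0] at h
    simpa using h.2
  · have hyn : ∀ n, ys n = (ad k L x ^ n) y := by
      intro n
      induction n with
      | zero => exact hy0
      | succ n ih => rw [hys, ih, pow_succ', Module.End.mul_apply, ad_apply]
    exact hyn p

/-- In characteristic `p ≥ 3`, the `p`-th iterated adjoint action in the semidirect
product `L ⋉ M` satisfies `m_p = φ(x)^p w − φ(y) (φ(x)^{p-1} v)` and `y_p = (ad x)^p y`. -/
theorem stmt3 {k : Type*} [Field k] {p : ℕ} (hp : p.Prime) (hp3 : 3 ≤ p) [CharP k p]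
    {L : Type*} [LieRing L] [LieAlgebra k L]
    {M : Type*} [AddCommGroup M] [Module k M]
    (φ : L →ₗ⁅k⁆ Module.End k M)
    (x y : L) (v w : M) (ys : ℕ → L) (ms : ℕ → M)
    (hy0 : ys 0 = y) (hm0 : ms 0 = w)
    (hys : ∀ n, ys (n + 1) = ⁅x, ys n⁆)
    (hms : ∀ n, ms (n + 1) = φ x (ms n) - φ (ys n) v) :
    ms p = (φ x ^ p) w - φ y ((φ x ^ (p - 1)) v) ∧
      ys p = (LieAlgebra.ad k L x ^ p) y :=
  stmt3_general hp φ x y v w ys ms hy0 hm0 hys hms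
end

section
/- Define rational numbers μ_{k,i} for k ≥ 3 and 0 ≤ i ≤ k-2 by: μ_{3,0} = μ_{3,1} = 1/2, and for k ≥ 4: μ_{k,0} = μ_{k-1,0} + (-1)^k, μ_{k,i} = μ_{k-1,i-1} + (-1)^i·μ_{k-1,i} for 1 ≤ i ≤ k-3, and μ_{k,k-2} = 1/2. Then the following closed forms hold: (a) for r ≥ 1 and 0 ≤ j ≤ r: μ_{2r+2,2j} = (1/2)·C(r,j) + C(r-1,j); (b) for r ≥ 1 and 0 ≤ j ≤ r-1: μ_{2r+2,2j+1} = −C(r-1,j+1); (c) for r ≥ 0 and 0 ≤ j ≤ r: μ_{2r+3,2j} = (1/2)·C(r,j); (d) for r ≥ 0 and 0 ≤ j ≤ r: μ_{2r+3,2j+1} = (1/2)·C(r,j) + C(r,j+1). Here C(n,k) denotes the binomial coefficient (with C(n,k) = 0 if k > n). -/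
/-- Closed forms for the coefficients `μ_{k,i}` defined by `μ_{3,0} = μ_{3,1} = 1/2`,
`μ_{k,0} = μ_{k-1,0} + (-1)^k`, `μ_{k,i} = μ_{k-1,i-1} + (-1)^i μ_{k-1,i}` (for
`1 ≤ i ≤ k-3`), and `μ_{k,k-2} = 1/2`:
(a) `μ_{2r+2,2j} = C(r,j)/2 + C(r-1,j)`; (b) `μ_{2r+2,2j+1} = −C(r-1,j+1)`;
(c) `μ_{2r+3,2j} = C(r,j)/2`; (d) `μ_{2r+3,2j+1} = C(r,j)/2 + C(r,j+1)`. -/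
theorem stmt9 (μ : ℕ → ℕ → ℚ)
    (h30 : μ 3 0 = 1 / 2) (h31 : μ 3 1 = 1 / 2)
    (hrec0 : ∀ k, 4 ≤ k → μ k 0 = μ (k - 1) 0 + (-1 : ℚ) ^ k)
    (hreci : ∀ k, 4 ≤ k → ∀ i, 1 ≤ i → i ≤ k - 3 →
      μ k i = μ (k - 1) (i - 1) + (-1 : ℚ) ^ i * μ (k - 1) i)
    (hrectop : ∀ k, 4 ≤ k → μ k (k - 2) = 1 / 2) :
    (∀ r, 1 ≤ r → ∀ j ≤ r,
        μ (2 * r + 2) (2 * j) = (1 / 2) * (r.choose j : ℚ) + ((r - 1).choose j : ℚ)) ∧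
    (∀ r, 1 ≤ r → ∀ j ≤ r - 1,
        μ (2 * r + 2) (2 * j + 1) = -((r - 1).choose (j + 1) : ℚ)) ∧
    (∀ r j, j ≤ r → μ (2 * r + 3) (2 * j) = (1 / 2) * (r.choose j : ℚ)) ∧
    (∀ r j, j ≤ r →
        μ (2 * r + 3) (2 * j + 1) = (1 / 2) * (r.choose j : ℚ) + (r.choose (j + 1) : ℚ)) := by
  -- step lemma: from the odd-case closed forms at level r, derive the even-case
  -- closed forms at level r+1 (i.e. for k = 2r+4).
  have ab : ∀ r, (∀ j ≤ r, μ (2 * r + 3) (2 * j) = (1 / 2) * (r.choose j : ℚ) ∧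
        μ (2 * r + 3) (2 * j + 1) = (1 / 2) * (r.choose j : ℚ) + (r.choose (j + 1) : ℚ)) →
      (∀ j ≤ r + 1, μ (2 * r + 4) (2 * j)
          = (1 / 2) * ((r + 1).choose j : ℚ) + (r.choose j : ℚ)) ∧
      (∀ j ≤ r, μ (2 * r + 4) (2 * j + 1) = -(r.choose (j + 1) : ℚ)) := by
    intro r hcd
    constructor
    · intro j hj
      rcases Nat.eq_zero_or_pos j with rfl | hj1
      · have h0 := hrec0 (2 * r + 4) (by omega)
        rw [show 2 * r + 4 - 1 = 2 * r + 3 from by omega] at h0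
        have h1 := (hcd 0 (by omega)).1
        have hev : (-1 : ℚ) ^ (2 * r + 4) = 1 := Even.neg_one_pow ⟨r + 2, by ring⟩
        simp only [Nat.mul_zero] at h0 h1 ⊢
        rw [h0, h1, hev]
        norm_num
      · obtain ⟨t, rfl⟩ : ∃ t, j = t + 1 := ⟨j - 1, by omega⟩
        rcases Nat.lt_or_ge t r with ht | ht
        · -- middle case: t + 1 ≤ r
          have h0 := hreci (2 * r + 4) (by omega) (2 * (t + 1)) (by omega) (by omega)
          rw [show 2 * r + 4 - 1 = 2 * r + 3 from by omega,
            show 2 * (t + 1) - 1 = 2 * t + 1 from by omega] at h0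
          have h1 := (hcd t (by omega)).2
          have h2 := (hcd (t + 1) (by omega)).1
          have hev : (-1 : ℚ) ^ (2 * (t + 1)) = 1 := Even.neg_one_pow ⟨t + 1, by ring⟩
          rw [h0, h1, h2, hev, Nat.choose_succ_succ r t]
          push_cast
          ring
        · -- top case: t + 1 = r + 1
          rw [show t = r from by omega]
          have h0 := hrectop (2 * r + 4) (by omega)
          rw [show 2 * r + 4 - 2 = 2 * (r + 1) from by omega] at h0
          rw [h0, Nat.choose_self, Nat.choose_eq_zero_of_lt (by omega)]
          norm_num
    · intro j hj
      have h0 := hreci (2 * r + 4) (by omega) (2 * j + 1) (by omega) (by omega)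
      rw [show 2 * r + 4 - 1 = 2 * r + 3 from by omega,
        show 2 * j + 1 - 1 = 2 * j from by omega] at h0
      have h1 := (hcd j hj).1
      have h2 := (hcd j hj).2
      have hod : (-1 : ℚ) ^ (2 * j + 1) = -1 := Odd.neg_one_pow ⟨j, by ring⟩
      rw [h0, h1, h2, hod]
      ring
  -- odd-case closed forms, by induction on r
  have cd : ∀ r, ∀ j ≤ r, μ (2 * r + 3) (2 * j) = (1 / 2) * (r.choose j : ℚ) ∧
      μ (2 * r + 3) (2 * j + 1) = (1 / 2) * (r.choose j : ℚ) + (r.choose (j + 1) : ℚ) := by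
    intro r
    induction r with
    | zero =>
      intro j hj
      interval_cases j
      refine ⟨by simpa using h30, ?_⟩
      simp only [Nat.mul_zero, Nat.zero_add, Nat.choose_self,
        Nat.choose_eq_zero_of_lt (by omega : (0:ℕ) < 1)]
      simpa using h31
    | succ r ih =>
      obtain ⟨ha, hb⟩ := ab r ih
      intro j hj
      constructor
      · rcases Nat.eq_zero_or_pos j with rfl | hj1
        · have h0 := hrec0 (2 * (r + 1) + 3) (by omega)
          rw [show 2 * (r + 1) + 3 - 1 = 2 * r + 4 from by omega] at h0
          have h1 := ha 0 (by omega)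
          have hod : (-1 : ℚ) ^ (2 * (r + 1) + 3) = -1 := Odd.neg_one_pow ⟨r + 2, by ring⟩
          simp only [Nat.mul_zero] at h0 h1 ⊢
          rw [h0, h1, hod]
          norm_num
        · obtain ⟨t, rfl⟩ : ∃ t, j = t + 1 := ⟨j - 1, by omega⟩
          have h0 := hreci (2 * (r + 1) + 3) (by omega) (2 * (t + 1)) (by omega) (by omega)
          rw [show 2 * (r + 1) + 3 - 1 = 2 * r + 4 from by omega,
            show 2 * (t + 1) - 1 = 2 * t + 1 from by omega] at h0
          have h1 := hb t (by omega)
          have h2 := ha (t + 1) (by omega)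
          have hev : (-1 : ℚ) ^ (2 * (t + 1)) = 1 := Even.neg_one_pow ⟨t + 1, by ring⟩
          rw [h0, h1, h2, hev]
          ring
      · rcases Nat.lt_or_ge j (r + 1) with hjr | hjr
        · have h0 := hreci (2 * (r + 1) + 3) (by omega) (2 * j + 1) (by omega) (by omega)
          rw [show 2 * (r + 1) + 3 - 1 = 2 * r + 4 from by omega,
            show 2 * j + 1 - 1 = 2 * j from by omega] at h0
          have h1 := ha j (by omega)
          have h2 := hb j (by omega)
          have hod : (-1 : ℚ) ^ (2 * j + 1) = -1 := Odd.neg_one_pow ⟨j, by ring⟩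
          rw [h0, h1, h2, hod, Nat.choose_succ_succ r j]
          push_cast
          ring
        · have hjr' : j = r + 1 := by omega
          subst hjr'
          have h0 := hrectop (2 * (r + 1) + 3) (by omega)
          rw [show 2 * (r + 1) + 3 - 2 = 2 * (r + 1) + 1 from by omega] at h0
          rw [h0, Nat.choose_self, Nat.choose_eq_zero_of_lt (by omega)]
          norm_num
  refine ⟨?_, ?_, fun r j hj => (cd r j hj).1, fun r j hj => (cd r j hj).2⟩
  · intro r hr j hj
    obtain ⟨s, rfl⟩ : ∃ s, r = s + 1 := ⟨r - 1, by omega⟩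
    rw [show 2 * (s + 1) + 2 = 2 * s + 4 from by ring, Nat.add_sub_cancel]
    exact (ab s (cd s)).1 j hj
  · intro r hr j hj
    obtain ⟨s, rfl⟩ : ∃ s, r = s + 1 := ⟨r - 1, by omega⟩
    rw [show 2 * (s + 1) + 2 = 2 * s + 4 from by ring, Nat.add_sub_cancel]
    exact (ab s (cd s)).2 j (by omega)
end

section
/- Let p be an odd prime, and define μ_{k,i} ∈ ℚ by μ_{3,0} = μ_{3,1} = 1/2, μ_{k,0} = μ_{k-1,0} + (-1)^k, μ_{k,i} = μ_{k-1,i-1} + (-1)^i·μ_{k-1,i} for 1 ≤ i ≤ k-3, and μ_{k,k-2} = 1/2 (k ≥ 4). Then 2·μ_{2p,i} is an integer for every 0 ≤ i ≤ 2p-2, and modulo p: 2·μ_{2p,2j} ≡ (2j+3)·(-1)^j for 0 ≤ j ≤ p-1, and 2·μ_{2p,2j+1} ≡ (2j+4)·(-1)^j for 0 ≤ j ≤ p-2. -/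
/-- `C(p-1, j) ≡ (-1)^j (mod p)` for `j ≤ p-1`. -/
lemma aux_choose_p1 {p : ℕ} (hp : p.Prime) :
    ∀ j ≤ p - 1, (((p - 1).choose j : ℕ) : ZMod p) = (-1) ^ j := by
  intro j hj
  induction j with
  | zero => simp
  | succ j ih =>
    have h1 : (((p - 1).choose j : ℕ) : ZMod p) = (-1) ^ j := ih (by omega)
    have hple : 2 ≤ p := hp.two_le
    have hdvd : p ∣ p.choose (j + 1) := hp.dvd_choose_self (by omega) (by omega)
    have hpas : (p - 1).choose j + (p - 1).choose (j + 1) = p.choose (j + 1) := by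
      have e : p - 1 + 1 = p := by omega
      calc (p - 1).choose j + (p - 1).choose (j + 1)
          = (p - 1 + 1).choose (j + 1) := (Nat.choose_succ_succ _ _).symm
        _ = p.choose (j + 1) := by rw [e]
    have hz : ((p.choose (j + 1) : ℕ) : ZMod p) = 0 :=
      (ZMod.natCast_eq_zero_iff _ _).mpr hdvd
    have := congrArg (fun n : ℕ => (n : ZMod p)) hpas
    push_cast at this
    rw [hz] at this
    rw [h1] at this
    have : (((p - 1).choose (j + 1) : ℕ) : ZMod p) = -(-1) ^ j := by linear_combination this
    rw [this]; ring

/-- `C(p-2, j) ≡ (-1)^j (j+1) (mod p)` for `j ≤ p-1`. -/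
lemma aux_choose_p2 {p : ℕ} (hp : p.Prime) (h3 : 3 ≤ p) :
    ∀ j ≤ p - 1, (((p - 2).choose j : ℕ) : ZMod p) = (-1) ^ j * (j + 1) := by
  intro j hj
  induction j with
  | zero => simp
  | succ j ih =>
    have h1 : (((p - 2).choose j : ℕ) : ZMod p) = (-1) ^ j * (j + 1) := ih (by omega)
    have h2 : (((p - 1).choose (j + 1) : ℕ) : ZMod p) = (-1) ^ (j + 1) :=
      aux_choose_p1 hp (j + 1) (by omega)
    have hpas : (p - 2).choose j + (p - 2).choose (j + 1) = (p - 1).choose (j + 1) := by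
      have e : p - 2 + 1 = p - 1 := by omega
      calc (p - 2).choose j + (p - 2).choose (j + 1)
          = (p - 2 + 1).choose (j + 1) := (Nat.choose_succ_succ _ _).symm
        _ = (p - 1).choose (j + 1) := by rw [e]
    have hc := congrArg (fun n : ℕ => (n : ZMod p)) hpas
    push_cast at hc
    rw [h1, h2] at hc
    have : (((p - 2).choose (j + 1) : ℕ) : ZMod p)
        = (-1) ^ (j + 1) - (-1) ^ j * (j + 1) := by linear_combination hc
    rw [this]
    push_cast
    ring

/-- Closed forms for rows `2t+4` and `2t+5` of twice the `μ` coefficients. -/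
lemma aux_rows (μ : ℕ → ℕ → ℚ)
    (h30 : μ 3 0 = 1 / 2) (h31 : μ 3 1 = 1 / 2)
    (hrec0 : ∀ k, 4 ≤ k → μ k 0 = μ (k - 1) 0 + (-1 : ℚ) ^ k)
    (hreci : ∀ k, 4 ≤ k → ∀ i, 1 ≤ i → i ≤ k - 3 →
      μ k i = μ (k - 1) (i - 1) + (-1 : ℚ) ^ i * μ (k - 1) i)
    (hrectop : ∀ k, 4 ≤ k → μ k (k - 2) = 1 / 2) :
    ∀ t : ℕ,
      (2 * μ (2 * t + 4) 0 = 3) ∧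
      (∀ j ≤ t, 2 * μ (2 * t + 4) (2 * j + 2)
          = 3 * (t.choose (j + 1) : ℚ) + (t.choose j : ℚ)) ∧
      (∀ j ≤ t, 2 * μ (2 * t + 4) (2 * j + 1) = -2 * (t.choose (j + 1) : ℚ)) ∧
      (∀ j ≤ t + 1, 2 * μ (2 * t + 5) (2 * j) = ((t + 1).choose j : ℚ)) ∧
      (2 * μ (2 * t + 5) 1 = 2 * t + 3) ∧
      (∀ j ≤ t, 2 * μ (2 * t + 5) (2 * j + 3)
          = 3 * (t.choose (j + 1) : ℚ) + (t.choose j : ℚ) + 2 * (t.choose (j + 2) : ℚ)) := by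
  intro t
  induction t with
  | zero =>
    have h40 : μ 4 0 = 3 / 2 := by
      have := hrec0 4 (by norm_num)
      norm_num at this
      rw [this, h30]; norm_num
    have h41 : μ 4 1 = 0 := by
      have := hreci 4 (by norm_num) 1 (by norm_num) (by norm_num)
      norm_num at this
      rw [this, h30, h31]; norm_num
    have h42 : μ 4 2 = 1 / 2 := by
      have := hrectop 4 (by norm_num)
      norm_num at this; exact this
    have h50 : μ 5 0 = 1 / 2 := by
      have := hrec0 5 (by norm_num)
      norm_num at this
      rw [this, h40]
      norm_num [pow_succ]
    have h51 : μ 5 1 = 3 / 2 := by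
      have := hreci 5 (by norm_num) 1 (by norm_num) (by norm_num)
      norm_num at this
      rw [this, h40, h41]; norm_num
    have h52 : μ 5 2 = 1 / 2 := by
      have := hreci 5 (by norm_num) 2 (by norm_num) (by norm_num)
      norm_num at this
      rw [this, h41, h42]; norm_num
    have h53 : μ 5 3 = 1 / 2 := by
      have := hrectop 5 (by norm_num)
      norm_num at this; exact this
    refine ⟨by rw [show 2*0+4 = 4 from rfl, h40]; norm_num, ?_, ?_, ?_, ?_, ?_⟩
    · intro j hj
      interval_cases j
      rw [show 2*0+4 = 4 from rfl, h42]; norm_num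
    · intro j hj
      interval_cases j
      rw [show 2*0+4 = 4 from rfl, h41]; norm_num
    · intro j hj
      interval_cases j
      · rw [show 2*0+5 = 5 from rfl, h50]; norm_num
      · rw [show 2*0+5 = 5 from rfl, h52]; norm_num
    · rw [show 2*0+5 = 5 from rfl, h51]; norm_num
    · intro j hj
      interval_cases j
      rw [show 2*0+5 = 5 from rfl, h53]; norm_num
  | succ t ih =>
    obtain ⟨ih0, ihE, ihO, ihF, ihG0, ihG⟩ := ih
    -- Row 2t+6 from row 2t+5
    have hE0 : 2 * μ (2 * t + 6) 0 = 3 := by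
      have hr := hrec0 (2 * t + 6) (by omega)
      have e1 : 2 * t + 6 - 1 = 2 * t + 5 := by omega
      rw [e1] at hr
      have hs : ((-1 : ℚ)) ^ (2 * t + 6) = 1 := Even.neg_one_pow ⟨t + 3, by ring⟩
      rw [hs] at hr
      have hF0 := ihF 0 (by omega)
      simp only [Nat.mul_zero, Nat.choose_zero_right] at hF0
      rw [hr]
      push_cast at hF0 ⊢
      linear_combination hF0
    have hO' : ∀ j ≤ t + 1, 2 * μ (2 * t + 6) (2 * j + 1)
        = -2 * ((t + 1).choose (j + 1) : ℚ) := by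
      intro j hj
      have hr := hreci (2 * t + 6) (by omega) (2 * j + 1) (by omega) (by omega)
      have e1 : 2 * t + 6 - 1 = 2 * t + 5 := by omega
      have e2 : 2 * j + 1 - 1 = 2 * j := by omega
      rw [e1, e2] at hr
      have hs : ((-1 : ℚ)) ^ (2 * j + 1) = -1 := Odd.neg_one_pow ⟨j, by ring⟩
      rw [hs] at hr
      have hF := ihF j (by omega)
      match j with
      | 0 =>
        rw [hr]
        simp only [Nat.mul_zero] at hF
        have hG := ihG0
        push_cast [Nat.choose_one_right, Nat.choose_zero_right] at hF hG ⊢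
        linear_combination hF - hG
      | j + 1 =>
        rw [hr]
        have hG := ihG j (by omega)
        have e3 : 2 * (j + 1) + 1 = 2 * j + 3 := by ring
        rw [e3]
        push_cast [Nat.choose_succ_succ (t + 1), Nat.choose_succ_succ t] at hF hG ⊢
        linear_combination hF - hG
    have hE' : ∀ j ≤ t + 1, 2 * μ (2 * t + 6) (2 * j + 2)
        = 3 * ((t + 1).choose (j + 1) : ℚ) + ((t + 1).choose j : ℚ) := by
      intro j hj
      rcases Nat.lt_or_ge j (t + 1) with hlt | hge
      · -- interior
        have hr := hreci (2 * t + 6) (by omega) (2 * j + 2) (by omega) (by omega)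
        have e1 : 2 * t + 6 - 1 = 2 * t + 5 := by omega
        have e2 : 2 * j + 2 - 1 = 2 * j + 1 := by omega
        rw [e1, e2] at hr
        have hs : ((-1 : ℚ)) ^ (2 * j + 2) = 1 := Even.neg_one_pow ⟨j + 1, by ring⟩
        rw [hs] at hr
        have hF := ihF (j + 1) (by omega)
        have e3 : 2 * (j + 1) = 2 * j + 2 := by ring
        rw [e3] at hF
        match j with
        | 0 =>
          rw [hr]
          have hG := ihG0
          push_cast [Nat.choose_succ_succ (t + 1), Nat.choose_one_right,
            Nat.choose_zero_right] at hF hG ⊢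
          linear_combination hF + hG
        | j + 1 =>
          rw [hr]
          have hG := ihG j (by omega)
          have e4 : 2 * (j + 1) + 1 = 2 * j + 3 := by ring
          rw [e4]
          push_cast [Nat.choose_succ_succ (t + 1), Nat.choose_succ_succ t] at hF hG ⊢
          linear_combination hF + hG
      · -- top: j = t+1
        have hj' : j = t + 1 := le_antisymm hj hge
        subst hj'
        have hr := hrectop (2 * t + 6) (by omega)
        have e1 : 2 * t + 6 - 2 = 2 * (t + 1) + 2 := by omega
        rw [e1] at hr
        rw [hr]
        rw [Nat.choose_succ_self, Nat.choose_self]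
        norm_num
    -- Row 2t+7 from row 2t+6
    have hF' : ∀ j ≤ t + 2, 2 * μ (2 * t + 7) (2 * j) = ((t + 2).choose j : ℚ) := by
      intro j hj
      match j with
      | 0 =>
        have hr := hrec0 (2 * t + 7) (by omega)
        have e1 : 2 * t + 7 - 1 = 2 * t + 6 := by omega
        rw [e1] at hr
        have hs : ((-1 : ℚ)) ^ (2 * t + 7) = -1 := Odd.neg_one_pow ⟨t + 3, by ring⟩
        rw [hs] at hr
        simp only [Nat.mul_zero, Nat.choose_zero_right]
        rw [hr]
        push_cast
        linear_combination hE0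
      | j + 1 =>
        have hr := hreci (2 * t + 7) (by omega) (2 * (j + 1)) (by omega) (by omega)
        have e1 : 2 * t + 7 - 1 = 2 * t + 6 := by omega
        have e2 : 2 * (j + 1) - 1 = 2 * j + 1 := by omega
        rw [e1, e2] at hr
        have hs : ((-1 : ℚ)) ^ (2 * (j + 1)) = 1 := Even.neg_one_pow ⟨j + 1, by ring⟩
        rw [hs] at hr
        have hO := hO' j (by omega)
        have hE := hE' j (by omega)
        have e3 : 2 * (j + 1) = 2 * j + 2 := by ring
        rw [e3] at hr ⊢
        rw [show (2:ℕ) * j + 2 = 2 * (j+1) from by ring] at hr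
        rw [show (2:ℕ) * (j+1) = 2 * j + 2 from by ring] at hr
        rw [hr]
        push_cast [Nat.choose_succ_succ (t + 1)] at hO hE ⊢
        linear_combination hO + hE
    have hG0' : 2 * μ (2 * t + 7) 1 = 2 * (t + 1) + 3 := by
      have hr := hreci (2 * t + 7) (by omega) 1 (by omega) (by omega)
      have e1 : 2 * t + 7 - 1 = 2 * t + 6 := by omega
      rw [e1] at hr
      norm_num at hr
      have hO := hO' 0 (by omega)
      simp only [Nat.mul_zero, Nat.zero_add] at hO
      rw [hr]
      push_cast [Nat.choose_one_right] at hO ⊢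
      linear_combination hE0 - hO
    have hG' : ∀ j ≤ t + 1, 2 * μ (2 * t + 7) (2 * j + 3)
        = 3 * ((t + 1).choose (j + 1) : ℚ) + ((t + 1).choose j : ℚ)
          + 2 * ((t + 1).choose (j + 2) : ℚ) := by
      intro j hj
      rcases Nat.lt_or_ge j (t + 1) with hlt | hge
      · have hr := hreci (2 * t + 7) (by omega) (2 * j + 3) (by omega) (by omega)
        have e1 : 2 * t + 7 - 1 = 2 * t + 6 := by omega
        have e2 : 2 * j + 3 - 1 = 2 * (j + 1) := by omega
        rw [e1, e2] at hr
        have hs : ((-1 : ℚ)) ^ (2 * j + 3) = -1 := Odd.neg_one_pow ⟨j + 1, by ring⟩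
        rw [hs] at hr
        have hE := hE' j (by omega)
        have hO := hO' (j + 1) (by omega)
        have e3 : 2 * (j + 1) + 1 = 2 * j + 3 := by ring
        rw [e3] at hO
        rw [show (2:ℕ) * (j + 1) = 2 * j + 2 from by ring] at hr
        rw [hr]
        linear_combination hE - hO
      · have hj' : j = t + 1 := le_antisymm hj hge
        subst hj'
        have hr := hrectop (2 * t + 7) (by omega)
        have e1 : 2 * t + 7 - 2 = 2 * (t + 1) + 3 := by omega
        rw [e1] at hr
        rw [hr]
        rw [Nat.choose_succ_self, Nat.choose_self,
          Nat.choose_eq_zero_of_lt (show t + 1 < t + 1 + 2 from by omega)]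
        norm_num
    refine ⟨?_, ?_, ?_, hF',
      by rw [show 2 * (t + 1) + 5 = 2 * t + 7 from by ring]
         push_cast at hG0' ⊢
         linear_combination hG0', hG'⟩
    · rw [show 2 * (t + 1) + 4 = 2 * t + 6 from by ring]; exact hE0
    · intro j hj
      rw [show 2 * (t + 1) + 4 = 2 * t + 6 from by ring]
      exact hE' j hj
    · intro j hj
      rw [show 2 * (t + 1) + 4 = 2 * t + 6 from by ring]
      exact hO' j hj

/-- For an odd prime `p` and the coefficients `μ_{k,i}` of the superized Hochschild
lemma, `2 μ_{2p,i}` is an integer for all `0 ≤ i ≤ 2p-2`, and modulo `p`: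
`2 μ_{2p,2j} ≡ (2j+3)(-1)^j` and `2 μ_{2p,2j+1} ≡ (2j+4)(-1)^j`. -/
theorem stmt10 {p : ℕ} (hp : p.Prime) (hodd : Odd p) (μ : ℕ → ℕ → ℚ)
    (h30 : μ 3 0 = 1 / 2) (h31 : μ 3 1 = 1 / 2)
    (hrec0 : ∀ k, 4 ≤ k → μ k 0 = μ (k - 1) 0 + (-1 : ℚ) ^ k)
    (hreci : ∀ k, 4 ≤ k → ∀ i, 1 ≤ i → i ≤ k - 3 →
      μ k i = μ (k - 1) (i - 1) + (-1 : ℚ) ^ i * μ (k - 1) i)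
    (hrectop : ∀ k, 4 ≤ k → μ k (k - 2) = 1 / 2) :
    (∀ i ≤ 2 * p - 2, ∃ n : ℤ, 2 * μ (2 * p) i = (n : ℚ)) ∧
    (∀ j ≤ p - 1, ∀ n : ℤ, 2 * μ (2 * p) (2 * j) = (n : ℚ) →
        (n : ZMod p) = (2 * j + 3 : ℕ) * (-1) ^ j) ∧
    (∀ j ≤ p - 2, ∀ n : ℤ, 2 * μ (2 * p) (2 * j + 1) = (n : ℚ) →
        (n : ZMod p) = (2 * j + 4 : ℕ) * (-1) ^ j) := by
  have h3 : 3 ≤ p := by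
    rcases hodd with ⟨m, hm⟩
    have := hp.two_le
    omega
  obtain ⟨t, ht⟩ : ∃ t, p = t + 2 := ⟨p - 2, by omega⟩
  obtain ⟨hE0, hE, hO, -, -, -⟩ := aux_rows μ h30 h31 hrec0 hreci hrectop t
  have hrow : 2 * p = 2 * t + 4 := by omega
  have htp : t = p - 2 := by omega
  refine ⟨?_, ?_, ?_⟩
  · -- integrality
    intro i hi
    rcases Nat.even_or_odd i with ⟨j, hij⟩ | ⟨j, hij⟩
    · match j, hij with
      | 0, hij =>
        refine ⟨3, ?_⟩
        rw [hij, hrow]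
        simpa using hE0
      | j + 1, hij =>
        refine ⟨3 * (t.choose (j + 1) : ℤ) + (t.choose j : ℤ), ?_⟩
        have := hE j (by omega)
        rw [hij, hrow, show j + 1 + (j + 1) = 2 * j + 2 from by ring, this]
        push_cast
        ring
    · refine ⟨-2 * (t.choose (j + 1) : ℤ), ?_⟩
      have := hO j (by omega)
      rw [hij, hrow, show 2 * j + 1 = 2 * j + 1 from rfl, this]
      push_cast
      ring
  · -- even congruence
    intro j hj n hn
    match j with
    | 0 =>
      have h := hE0
      rw [← hrow] at h
      simp only [Nat.mul_zero] at hn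
      rw [hn] at h
      have hn3 : n = 3 := by exact_mod_cast h
      subst hn3
      norm_num
    | j + 1 =>
      have h := hE j (by omega)
      rw [← hrow, show 2 * j + 2 = 2 * (j + 1) from by ring] at h
      rw [hn] at h
      have hn' : n = 3 * (t.choose (j + 1) : ℤ) + (t.choose j : ℤ) := by
        exact_mod_cast h
      subst hn'
      have c1 := aux_choose_p2 hp h3 (j + 1) (by omega)
      have c2 := aux_choose_p2 hp h3 j (by omega)
      rw [← htp] at c1 c2
      push_cast [c1, c2]
      ring
  · -- odd congruence
    intro j hj n hn
    have h := hO j (by omega)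
    rw [← hrow] at h
    rw [hn] at h
    have hn' : n = -2 * (t.choose (j + 1) : ℤ) := by exact_mod_cast h
    subst hn'
    have c1 := aux_choose_p2 hp h3 (j + 1) (by omega)
    rw [← htp] at c1
    push_cast [c1]
    ring
end

section
/- Let p be an odd prime, and define μ_{k,i} ∈ ℚ by μ_{3,0} = μ_{3,1} = 1/2, μ_{k,0} = μ_{k-1,0} + (-1)^k, μ_{k,i} = μ_{k-1,i-1} + (-1)^i·μ_{k-1,i} for 1 ≤ i ≤ k-3, and μ_{k,k-2} = 1/2 (k ≥ 4). Define the reduced coefficients λ_i := μ_{2p,i} + (-1)^i·μ_{2p,2p-2-i} for 0 ≤ i ≤ p-2, and λ_{p-1} := μ_{2p,p-1}. Then each 2·λ_i is an integer, and modulo p: 2·λ_i ≡ 4·(-1)^{i/2} if i is even and 0 ≤ i < p-1; 2·λ_i ≡ 4·(-1)^{(i-1)/2} if i is odd and 1 ≤ i < p-1; and 2·λ_{p-1} ≡ 2·(-1)^{(p-1)/2}. Equivalently, in the field with p elements, λ_i = 2·(-1)^{i/2} for even i < p-1, λ_i = 2·(-1)^{(i-1)/2} for odd i < p-1, and λ_{p-1}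 = (-1)^{(p-1)/2}. -/
namespace Stmt11Aux

def nu (k i : ℕ) : ℤ :=
  if k % 2 = 0 then
    if i % 2 = 0 then (k / 2 - 1).choose (i / 2) + 2 * (k / 2 - 2).choose (i / 2)
    else (k / 2 - 2).choose (i / 2) - (k / 2 - 1).choose (i / 2 + 1)
      - (k / 2 - 2).choose (i / 2 + 1)
  else
    if i % 2 = 0 then ((k - 3) / 2).choose (i / 2)
    else ((k - 1) / 2).choose (i / 2 + 1) + ((k - 3) / 2).choose (i / 2 + 1)

lemma nu_oe (m j : ℕ) : nu (2 * m + 3) (2 * j) = m.choose j := by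
  rw [nu, if_neg (by omega), if_pos (by omega), show (2 * m + 3 - 3) / 2 = m by omega,
    show 2 * j / 2 = j by omega]

lemma nu_oo (m j : ℕ) :
    nu (2 * m + 3) (2 * j + 1) = (m + 1).choose (j + 1) + m.choose (j + 1) := by
  rw [nu, if_neg (by omega), if_neg (by omega), show (2 * m + 3 - 3) / 2 = m by omega,
    show (2 * m + 3 - 1) / 2 = m + 1 by omega, show (2 * j + 1) / 2 = j by omega]

lemma nu_ee (m j : ℕ) : nu (2 * m + 4) (2 * j) = (m + 1).choose j + 2 * m.choose j := by
  rw [nu, if_pos (by omega), if_pos (by omega), show (2 * m + 4) / 2 - 1 = m + 1 by omega,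
    show (2 * m + 4) / 2 - 2 = m by omega, show 2 * j / 2 = j by omega]

lemma nu_eo (m j : ℕ) :
    nu (2 * m + 4) (2 * j + 1)
      = m.choose j - (m + 1).choose (j + 1) - m.choose (j + 1) := by
  rw [nu, if_pos (by omega), if_neg (by omega), show (2 * m + 4) / 2 - 1 = m + 1 by omega,
    show (2 * m + 4) / 2 - 2 = m by omega, show (2 * j + 1) / 2 = j by omega]

section
variable (μ : ℕ → ℕ → ℚ)

lemma even_of_odd
    (hrec0 : ∀ k, 4 ≤ k → μ k 0 = μ (k - 1) 0 + (-1 : ℚ) ^ k)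
    (hreci : ∀ k, 4 ≤ k → ∀ i, 1 ≤ i → i ≤ k - 3 →
      μ k i = μ (k - 1) (i - 1) + (-1 : ℚ) ^ i * μ (k - 1) i)
    (hrectop : ∀ k, 4 ≤ k → μ k (k - 2) = 1 / 2)
    (m : ℕ) (h : ∀ i ≤ 2 * m + 1, 2 * μ (2 * m + 3) i = (nu (2 * m + 3) i : ℚ)) :
    ∀ i ≤ 2 * m + 2, 2 * μ (2 * m + 4) i = (nu (2 * m + 4) i : ℚ) := by
  intro i hi
  have h4 : 4 ≤ 2 * m + 4 := by omega
  by_cases h0 : i = 0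
  · subst h0
    have hr := hrec0 (2 * m + 4) h4
    rw [show 2 * m + 4 - 1 = 2 * m + 3 by omega] at hr
    have hmu := h 0 (by omega)
    have e0 : nu (2 * m + 3) 0 = 1 := by simpa using nu_oe m 0
    have e1 : nu (2 * m + 4) 0 = 3 := by simpa using nu_ee m 0
    have hpow : (-1 : ℚ) ^ (2 * m + 4) = 1 := by
      rw [show 2 * m + 4 = 2 * (m + 2) by ring, pow_mul]; norm_num
    rw [hr, hpow, e1]
    rw [e0] at hmu
    push_cast
    push_cast at hmu
    linarith
  by_cases htop : i = 2 * m + 2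
  · subst htop
    have hr := hrectop (2 * m + 4) h4
    rw [show 2 * m + 4 - 2 = 2 * m + 2 by omega] at hr
    have e1 : nu (2 * m + 4) (2 * m + 2) = 1 := by
      have := nu_ee m (m + 1)
      rw [show 2 * (m + 1) = 2 * m + 2 by ring] at this
      rw [this, Nat.choose_self, Nat.choose_succ_self]
      ring
    rw [hr, e1]; norm_num
  · rcases Nat.even_or_odd i with ⟨j, hj⟩ | ⟨j, hj⟩
    · replace hj : i = 2 * j := by omega
      subst hj
      have hj1 : 1 ≤ j := by omega
      have hr := hreci (2 * m + 4) h4 (2 * j) (by omega) (by omega)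
      rw [show 2 * m + 4 - 1 = 2 * m + 3 by omega,
        show 2 * j - 1 = 2 * (j - 1) + 1 by omega] at hr
      have h1 := h (2 * (j - 1) + 1) (by omega)
      have h2 := h (2 * j) (by omega)
      have hpow : (-1 : ℚ) ^ (2 * j) = 1 := by rw [pow_mul]; norm_num
      have key : nu (2 * m + 4) (2 * j) = nu (2 * m + 3) (2 * (j - 1) + 1)
          + nu (2 * m + 3) (2 * j) := by
        rw [nu_ee, nu_oo, nu_oe, show j - 1 + 1 = j by omega]; ring
      rw [hr, hpow, key]
      push_cast
      push_cast at h1 h2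
      linarith
    · subst hj
      have hr := hreci (2 * m + 4) h4 (2 * j + 1) (by omega) (by omega)
      rw [show 2 * m + 4 - 1 = 2 * m + 3 by omega,
        show 2 * j + 1 - 1 = 2 * j by omega] at hr
      have h1 := h (2 * j) (by omega)
      have h2 := h (2 * j + 1) (by omega)
      have hpow : (-1 : ℚ) ^ (2 * j + 1) = -1 := by rw [pow_succ, pow_mul]; norm_num
      have key : nu (2 * m + 4) (2 * j + 1) = nu (2 * m + 3) (2 * j)
          - nu (2 * m + 3) (2 * j + 1) := by
        rw [nu_eo, nu_oe, nu_oo]; ring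
      rw [hr, hpow, key]
      push_cast
      push_cast at h1 h2
      linarith

lemma odd_succ
    (hrec0 : ∀ k, 4 ≤ k → μ k 0 = μ (k - 1) 0 + (-1 : ℚ) ^ k)
    (hreci : ∀ k, 4 ≤ k → ∀ i, 1 ≤ i → i ≤ k - 3 →
      μ k i = μ (k - 1) (i - 1) + (-1 : ℚ) ^ i * μ (k - 1) i)
    (hrectop : ∀ k, 4 ≤ k → μ k (k - 2) = 1 / 2)
    (m : ℕ) (h : ∀ i ≤ 2 * m + 2, 2 * μ (2 * m + 4) i = (nu (2 * m + 4) i : ℚ)) :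
    ∀ i ≤ 2 * m + 3, 2 * μ (2 * m + 5) i = (nu (2 * m + 5) i : ℚ) := by
  intro i hi
  have h4 : 4 ≤ 2 * m + 5 := by omega
  have e5 : 2 * (m + 1) + 3 = 2 * m + 5 := by ring
  by_cases h0 : i = 0
  · subst h0
    have hr := hrec0 (2 * m + 5) h4
    rw [show 2 * m + 5 - 1 = 2 * m + 4 by omega] at hr
    have hmu := h 0 (by omega)
    have e0 : nu (2 * m + 4) 0 = 3 := by simpa using nu_ee m 0
    have e1 : nu (2 * m + 5) 0 = 1 := by
      have := nu_oe (m + 1) 0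
      rw [e5] at this; simpa using this
    have hpow : (-1 : ℚ) ^ (2 * m + 5) = -1 := by
      rw [show 2 * m + 5 = 2 * (m + 2) + 1 by ring, pow_succ, pow_mul]; norm_num
    rw [hr, hpow, e1]
    rw [e0] at hmu
    push_cast
    push_cast at hmu
    linarith
  by_cases htop : i = 2 * m + 3
  · subst htop
    have hr := hrectop (2 * m + 5) h4
    rw [show 2 * m + 5 - 2 = 2 * m + 3 by omega] at hr
    have e1 : nu (2 * m + 5) (2 * m + 3) = 1 := by
      have := nu_oo (m + 1) (m + 1)
      rw [e5, show 2 * (m + 1) + 1 = 2 * m + 3 by ring] at this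
      rw [this, Nat.choose_self, Nat.choose_succ_self]
      ring
    rw [hr, e1]; norm_num
  · rcases Nat.even_or_odd i with ⟨j, hj⟩ | ⟨j, hj⟩
    · replace hj : i = 2 * j := by omega
      subst hj
      have hj1 : 1 ≤ j := by omega
      have hr := hreci (2 * m + 5) h4 (2 * j) (by omega) (by omega)
      rw [show 2 * m + 5 - 1 = 2 * m + 4 by omega,
        show 2 * j - 1 = 2 * (j - 1) + 1 by omega] at hr
      have h1 := h (2 * (j - 1) + 1) (by omega)
      have h2 := h (2 * j) (by omega)
      have hpow : (-1 : ℚ) ^ (2 * j) = 1 := by rw [pow_mul]; norm_num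
      have key : nu (2 * m + 5) (2 * j) = nu (2 * m + 4) (2 * (j - 1) + 1)
          + nu (2 * m + 4) (2 * j) := by
        rw [← e5, nu_oe, nu_eo, nu_ee, show j - 1 + 1 = j by omega]
        have pas : (m + 1).choose j = m.choose (j - 1) + m.choose j := by
          have := Nat.choose_succ_succ m (j - 1)
          rwa [Nat.succ_eq_add_one, Nat.succ_eq_add_one, show j - 1 + 1 = j by omega] at this
        push_cast [pas]
        ring
      rw [hr, hpow, key]
      push_cast
      push_cast at h1 h2
      linarith
    · subst hj
      have hr := hreci (2 * m + 5) h4 (2 * j + 1) (by omega) (by omega)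
      rw [show 2 * m + 5 - 1 = 2 * m + 4 by omega,
        show 2 * j + 1 - 1 = 2 * j by omega] at hr
      have h1 := h (2 * j) (by omega)
      have h2 := h (2 * j + 1) (by omega)
      have hpow : (-1 : ℚ) ^ (2 * j + 1) = -1 := by rw [pow_succ, pow_mul]; norm_num
      have key : nu (2 * m + 5) (2 * j + 1) = nu (2 * m + 4) (2 * j)
          - nu (2 * m + 4) (2 * j + 1) := by
        rw [← e5, nu_oo, nu_ee, nu_eo]
        have pas1 : (m + 2).choose (j + 1) = (m + 1).choose j + (m + 1).choose (j + 1) := by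
          have := Nat.choose_succ_succ (m + 1) j
          rwa [Nat.succ_eq_add_one, Nat.succ_eq_add_one] at this
        have pas2 : (m + 1).choose (j + 1) = m.choose j + m.choose (j + 1) := by
          have := Nat.choose_succ_succ m j
          rwa [Nat.succ_eq_add_one, Nat.succ_eq_add_one] at this
        push_cast [pas1]
        push_cast [pas2]
        ring
      rw [hr, hpow, key]
      push_cast
      push_cast at h1 h2
      linarith

lemma podd (h30 : μ 3 0 = 1 / 2) (h31 : μ 3 1 = 1 / 2)
    (hrec0 : ∀ k, 4 ≤ k → μ k 0 = μ (k - 1) 0 + (-1 : ℚ) ^ k)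
    (hreci : ∀ k, 4 ≤ k → ∀ i, 1 ≤ i → i ≤ k - 3 →
      μ k i = μ (k - 1) (i - 1) + (-1 : ℚ) ^ i * μ (k - 1) i)
    (hrectop : ∀ k, 4 ≤ k → μ k (k - 2) = 1 / 2) :
    ∀ m, ∀ i ≤ 2 * m + 1, 2 * μ (2 * m + 3) i = (nu (2 * m + 3) i : ℚ) := by
  intro m
  induction m with
  | zero =>
    intro i hi
    interval_cases i
    · have e : nu 3 0 = 1 := by simpa using nu_oe 0 0
      simp only [show 2 * 0 + 3 = 3 by norm_num, e, h30]
      norm_num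
    · have e : nu 3 1 = 1 := by simpa using nu_oo 0 0
      simp only [show 2 * 0 + 3 = 3 by norm_num, e, h31]
      norm_num
  | succ n ih =>
    have he := even_of_odd μ hrec0 hreci hrectop n ih
    have := odd_succ μ hrec0 hreci hrectop n he
    intro i hi
    have e : 2 * (n + 1) + 3 = 2 * n + 5 := by ring
    rw [e]
    exact this i (by omega)

end



lemma negpow {R : Type*} [Monoid R] [HasDistribNeg R] (a : ℕ) :
    (-1 : R) ^ a = (-1) ^ (a % 2) := by
  conv_lhs => rw [← Nat.div_add_mod a 2]
  rw [pow_add, pow_mul, neg_one_sq, one_pow, one_mul]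

lemma cast_p_choose_zero {p c : ℕ} (h : p ∣ c) : ((c : ℕ) : ZMod p) = 0 := by
  obtain ⟨d, rfl⟩ := h
  push_cast [ZMod.natCast_self]
  ring

lemma choose_p1 {p : ℕ} (hp : p.Prime) : ∀ j ≤ p - 1, (((p - 1).choose j : ℕ) : ZMod p) = (-1) ^ j := by
  intro j
  induction j with
  | zero => intro _; simp
  | succ n ih =>
    intro hn1
    have hn := ih (by omega)
    have pas : (p - 1).choose n + (p - 1).choose (n + 1) = p.choose (n + 1) := by
      have := Nat.choose_succ_succ (p - 1) n
      rw [Nat.succ_eq_add_one, Nat.succ_eq_add_one, show p - 1 + 1 = p by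
        have := hp.two_le; omega] at this
      omega
    have hdvd : p ∣ p.choose (n + 1) := hp.dvd_choose_self (by omega) (by
      have := hp.two_le; omega)
    have h0 : ((p.choose (n + 1) : ℕ) : ZMod p) = 0 := cast_p_choose_zero hdvd
    have hc := congrArg (Nat.cast : ℕ → ZMod p) pas
    push_cast at hc
    rw [h0] at hc
    rw [hn] at hc
    linear_combination hc
  
lemma choose_p2 {p : ℕ} (hp : p.Prime) :
    ∀ j ≤ p - 2, (((p - 2).choose j : ℕ) : ZMod p) = (-1) ^ j * ((j : ZMod p) + 1) := by
  intro j
  induction j with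
  | zero => intro _; simp
  | succ n ih =>
    intro hn1
    have hn := ih (by omega)
    have pas : (p - 2).choose n + (p - 2).choose (n + 1) = (p - 1).choose (n + 1) := by
      have := Nat.choose_succ_succ (p - 2) n
      rw [Nat.succ_eq_add_one, Nat.succ_eq_add_one, show p - 2 + 1 = p - 1 by
        have := hp.two_le; omega] at this
      omega
    have h1 := choose_p1 hp (n + 1) (by omega)
    have hc := congrArg (Nat.cast : ℕ → ZMod p) pas
    push_cast at hc ⊢
    rw [h1, hn] at hc
    linear_combination hc
  

end Stmt11Aux

open Stmt11Aux
/-- For an odd prime `p`, the reduced coefficients `λ_i = μ_{2p,i} + (-1)^i μ_{2p,2p-2-i}`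
(`0 ≤ i ≤ p-2`) and `λ_{p-1} = μ_{2p,p-1}` satisfy: `2 λ_i` is an integer, and modulo `p`,
`2 λ_i ≡ 4 (-1)^{i/2}` for even `i < p-1`, `2 λ_i ≡ 4 (-1)^{(i-1)/2}` for odd `i < p-1`,
and `2 λ_{p-1} ≡ 2 (-1)^{(p-1)/2}`. -/
theorem stmt11 {p : ℕ} (hp : p.Prime) (hodd : Odd p) (μ : ℕ → ℕ → ℚ)
    (h30 : μ 3 0 = 1 / 2) (h31 : μ 3 1 = 1 / 2)
    (hrec0 : ∀ k, 4 ≤ k → μ k 0 = μ (k - 1) 0 + (-1 : ℚ) ^ k)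
    (hreci : ∀ k, 4 ≤ k → ∀ i, 1 ≤ i → i ≤ k - 3 →
      μ k i = μ (k - 1) (i - 1) + (-1 : ℚ) ^ i * μ (k - 1) i)
    (hrectop : ∀ k, 4 ≤ k → μ k (k - 2) = 1 / 2)
    (lam : ℕ → ℚ)
    (hlam : ∀ i ≤ p - 2,
      lam i = μ (2 * p) i + (-1 : ℚ) ^ i * μ (2 * p) (2 * p - 2 - i))
    (hlamtop : lam (p - 1) = μ (2 * p) (p - 1)) :
    (∀ i ≤ p - 1, ∃ n : ℤ, 2 * lam i = (n : ℚ)) ∧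
    (∀ i, i < p - 1 → Even i → ∀ n : ℤ, 2 * lam i = (n : ℚ) →
        (n : ZMod p) = 4 * (-1) ^ (i / 2)) ∧
    (∀ i, i < p - 1 → Odd i → ∀ n : ℤ, 2 * lam i = (n : ℚ) →
        (n : ZMod p) = 4 * (-1) ^ ((i - 1) / 2)) ∧
    (∀ n : ℤ, 2 * lam (p - 1) = (n : ℚ) →
        (n : ZMod p) = 2 * (-1) ^ ((p - 1) / 2)) := by
  obtain ⟨t, hpt⟩ := hodd
  have hp2 : 2 ≤ p := hp.two_le
  have hp3 : 3 ≤ p := by omega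
  have hkey : ∀ i ≤ 2 * p - 2, 2 * μ (2 * p) i = (nu (2 * p) i : ℚ) := by
    have h := even_of_odd μ hrec0 hreci hrectop (p - 2)
      (podd μ h30 h31 hrec0 hreci hrectop (p - 2))
    rw [show 2 * (p - 2) + 4 = 2 * p by omega, show 2 * (p - 2) + 2 = 2 * p - 2 by omega] at h
    exact h
  have hint : ∀ i ≤ p - 2,
      2 * lam i = ((nu (2 * p) i + (-1 : ℤ) ^ i * nu (2 * p) (2 * p - 2 - i) : ℤ) : ℚ) := by
    intro i hi
    rw [hlam i hi]
    have h1 := hkey i (by omega)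
    have h2 := hkey (2 * p - 2 - i) (by omega)
    push_cast
    linear_combination h1 + (-1 : ℚ) ^ i * h2
  have hinttop : 2 * lam (p - 1) = ((nu (2 * p) (p - 1) : ℤ) : ℚ) := by
    rw [hlamtop]; exact hkey _ (by omega)
  have e2p : 2 * (p - 2) + 4 = 2 * p := by omega
  have ep1 : p - 2 + 1 = p - 1 := by omega
  refine ⟨?_, ?_, ?_, ?_⟩
  · intro i hi
    rcases le_or_gt i (p - 2) with h | h
    · exact ⟨_, hint i h⟩
    · have : i = p - 1 := by omega
      rw [this]
      exact ⟨_, hinttop⟩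
  · -- even case
    intro i hilt hev n hn
    obtain ⟨j, hj⟩ := hev
    replace hj : i = 2 * j := by omega
    subst hj
    have hN : n = nu (2 * p) (2 * j) + (-1 : ℤ) ^ (2 * j) * nu (2 * p) (2 * p - 2 - 2 * j) := by
      have h := hint (2 * j) (by omega)
      rw [hn] at h
      exact_mod_cast h
    have hjb : 2 * j ≤ p - 3 := by omega
    have e1 : 2 * p - 2 - 2 * j = 2 * (p - 1 - j) := by omega
    have hnu1 : nu (2 * p) (2 * j) = ((p - 1).choose j : ℤ) + 2 * ((p - 2).choose j : ℤ) := by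
      have := nu_ee (p - 2) j
      rw [e2p, ep1] at this
      exact this
    have hnu2 : nu (2 * p) (2 * (p - 1 - j))
        = ((p - 1).choose (p - 1 - j) : ℤ) + 2 * ((p - 2).choose (p - 1 - j) : ℤ) := by
      have := nu_ee (p - 2) (p - 1 - j)
      rw [e2p, ep1] at this
      exact this
    have hs : (-1 : ℤ) ^ (2 * j) = 1 := by rw [pow_mul]; norm_num
    have hlast : (((p - 2).choose (p - 1 - j) : ℕ) : ZMod p)
        = (-1 : ZMod p) ^ j * (-(j : ZMod p)) := by
      rcases Nat.eq_zero_or_pos j with rfl | hj1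
      · rw [show p - 1 - 0 = p - 1 by omega, Nat.choose_eq_zero_of_lt (by omega)]
        simp
      · rw [choose_p2 hp (p - 1 - j) (by omega)]
        have hc : ((p - 1 - j : ℕ) : ZMod p) = -1 - (j : ZMod p) := by
          have h' : ((p - 1 - j) + (j + 1) : ℕ) = p := by omega
          have h'' := congrArg (Nat.cast : ℕ → ZMod p) h'
          push_cast [ZMod.natCast_self] at h''
          linear_combination h''
        rw [hc, negpow (p - 1 - j), negpow j, show (p - 1 - j) % 2 = j % 2 by omega]
        ring
    have hp1j : (((p - 1).choose (p - 1 - j) : ℕ) : ZMod p) = (-1 : ZMod p) ^ j := by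
      rw [choose_p1 hp (p - 1 - j) (by omega), negpow (p - 1 - j), negpow j,
        show (p - 1 - j) % 2 = j % 2 by omega]
    rw [hN, e1, hnu1, hnu2, hs]
    push_cast
    rw [choose_p1 hp j (by omega), choose_p2 hp j (by omega), hp1j, hlast,
      show 2 * j / 2 = j by omega]
    ring
  · -- odd case
    intro i hilt hoddi n hn
    obtain ⟨j, rfl⟩ := hoddi
    have hi2 : 2 * j + 1 ≤ p - 2 := by omega
    have hN : n = nu (2 * p) (2 * j + 1)
        + (-1 : ℤ) ^ (2 * j + 1) * nu (2 * p) (2 * p - 2 - (2 * j + 1)) := by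
      have h := hint (2 * j + 1) hi2
      rw [hn] at h
      exact_mod_cast h
    have hs : (-1 : ℤ) ^ (2 * j + 1) = -1 := by rw [pow_succ, pow_mul]; norm_num
    have e1 : 2 * p - 2 - (2 * j + 1) = 2 * (p - 2 - j) + 1 := by omega
    have hnu1 : nu (2 * p) (2 * j + 1) = ((p - 2).choose j : ℤ)
        - ((p - 1).choose (j + 1) : ℤ) - ((p - 2).choose (j + 1) : ℤ) := by
      have := nu_eo (p - 2) j
      rw [e2p, ep1] at this
      exact this
    have hnu2 : nu (2 * p) (2 * (p - 2 - j) + 1) = ((p - 2).choose (p - 2 - j) : ℤ)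
        - ((p - 1).choose (p - 1 - j) : ℤ) - ((p - 2).choose (p - 1 - j) : ℤ) := by
      have := nu_eo (p - 2) (p - 2 - j)
      rw [e2p, ep1, show p - 2 - j + 1 = p - 1 - j by omega] at this
      exact this
    have c1 : (((p - 2).choose j : ℕ) : ZMod p) = (-1) ^ j * ((j : ZMod p) + 1) :=
      choose_p2 hp j (by omega)
    have c2 : (((p - 1).choose (j + 1) : ℕ) : ZMod p) = (-1) ^ (j + 1) := by
      have := choose_p1 hp (j + 1) (by omega)
      push_cast at this ⊢
      exact this
    have c3 : (((p - 2).choose (j + 1) : ℕ) : ZMod p)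
        = (-1) ^ (j + 1) * ((j : ZMod p) + 2) := by
      have := choose_p2 hp (j + 1) (by omega)
      push_cast at this
      rw [this]; ring
    have c4 : (((p - 2).choose (p - 2 - j) : ℕ) : ZMod p)
        = (-1) ^ (j + 1) * (-1 - (j : ZMod p)) := by
      rw [choose_p2 hp (p - 2 - j) (by omega)]
      have hc : ((p - 2 - j : ℕ) : ZMod p) = -2 - (j : ZMod p) := by
        have h' : ((p - 2 - j) + (j + 2) : ℕ) = p := by omega
        have h'' := congrArg (Nat.cast : ℕ → ZMod p) h'
        push_cast [ZMod.natCast_self] at h''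
        linear_combination h''
      rw [hc, negpow (p - 2 - j), negpow (j + 1), show (p - 2 - j) % 2 = (j + 1) % 2 by omega]
      ring
    have c5 : (((p - 1).choose (p - 1 - j) : ℕ) : ZMod p) = (-1 : ZMod p) ^ j := by
      rw [choose_p1 hp (p - 1 - j) (by omega), negpow (p - 1 - j), negpow j,
        show (p - 1 - j) % 2 = j % 2 by omega]
    have c6 : (((p - 2).choose (p - 1 - j) : ℕ) : ZMod p)
        = (-1 : ZMod p) ^ j * (-(j : ZMod p)) := by
      rcases Nat.eq_zero_or_pos j with rfl | hj1
      · rw [show p - 1 - 0 = p - 1 by omega, Nat.choose_eq_zero_of_lt (by omega)]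
        simp
      · rw [choose_p2 hp (p - 1 - j) (by omega)]
        have hc : ((p - 1 - j : ℕ) : ZMod p) = -1 - (j : ZMod p) := by
          have h' : ((p - 1 - j) + (j + 1) : ℕ) = p := by omega
          have h'' := congrArg (Nat.cast : ℕ → ZMod p) h'
          push_cast [ZMod.natCast_self] at h''
          linear_combination h''
        rw [hc, negpow (p - 1 - j), negpow j, show (p - 1 - j) % 2 = j % 2 by omega]
        ring
    rw [hN, hs, e1, hnu1, hnu2]
    push_cast
    rw [c1, c2, c3, c4, c5, c6, show 2 * j / 2 = j by omega]
    ring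
  · -- top case
    intro n hn
    have hN : n = nu (2 * p) (p - 1) := by
      have h := hinttop
      rw [hn] at h
      exact_mod_cast h
    have et : p - 1 = 2 * t := by omega
    have hnu : nu (2 * p) (2 * t) = ((p - 1).choose t : ℤ) + 2 * ((p - 2).choose t : ℤ) := by
      have := nu_ee (p - 2) t
      rw [e2p, ep1] at this
      exact this
    have hz : 2 * (t : ZMod p) + 1 = 0 := by
      have h2' : ((2 * t + 1 : ℕ) : ZMod p) = 0 := by
        rw [← hpt]; exact ZMod.natCast_self p
      push_cast at h2'
      linear_combination h2'
    rw [hN, et, hnu]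
    push_cast
    rw [choose_p1 hp t (by omega), choose_p2 hp t (by omega), show 2 * t / 2 = t by omega]
    linear_combination ((-1 : ZMod p) ^ t) * hz
end

section
/- Let p be an odd prime and let P be a polynomial with rational coefficients such that P(n) is an integer for every natural number n, P(0) = 0, deg P = p, and the leading coefficient of P equals 1/((p-1)/2)!. Then P(p) is an integer divisible by p. -/
open Finset Polynomial fwdDiff

private lemma fwdDiff_eval_aux (P : Polynomial ℚ) (x : ℚ) :
    Δ_[1] (fun y : ℚ ↦ P.eval y) x = ((taylor 1 P) - P).eval x := by
  simp [fwdDiff, taylor_apply, eval_comp]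

private lemma diff_iter_eval : ∀ (n : ℕ) (P : Polynomial ℚ), P.natDegree ≤ n → ∀ x : ℚ,
    (Δ_[1])^[n] (fun y : ℚ ↦ P.eval y) x = n.factorial * P.coeff n := by
  intro n
  induction n with
  | zero =>
    intro P hP x
    rw [Polynomial.eq_C_of_natDegree_le_zero hP]
    simp
  | succ n IH =>
    intro P hP x
    set Q : Polynomial ℚ := taylor 1 P - P with hQ
    have hCder : ∀ m, P.natDegree ≤ m → hasseDeriv m P = C (P.coeff m) := by
      intro m hm
      have hd : (hasseDeriv m P).natDegree ≤ 0 :=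
        (natDegree_hasseDeriv_le P m).trans (by omega)
      rw [Polynomial.eq_C_of_natDegree_le_zero hd, hasseDeriv_coeff]
      simp
    have hQc : ∀ m, n < m → Q.coeff m = 0 := by
      intro m hm
      have h1 : P.natDegree ≤ m := hP.trans hm
      rw [hQ, coeff_sub, taylor_coeff, hCder m h1]
      simp
    have hQd : Q.natDegree ≤ n := natDegree_le_iff_coeff_eq_zero.mpr hQc
    have hQn : Q.coeff n = (n + 1 : ℚ) * P.coeff (n + 1) := by
      have hdd : (hasseDeriv n P).natDegree < 2 := by
        have := natDegree_hasseDeriv_le P n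
        omega
      rw [hQ, coeff_sub, taylor_coeff, Polynomial.eval_eq_sum_range' hdd]
      simp only [Finset.sum_range_succ, Finset.sum_range_one, hasseDeriv_coeff, one_pow, mul_one]
      rw [zero_add, Nat.choose_self, add_comm 1 n, Nat.choose_succ_self_right]
      push_cast
      ring
    have hfd : Δ_[1] (fun y : ℚ ↦ P.eval y) = fun y : ℚ ↦ Q.eval y :=
      funext (fwdDiff_eval_aux P)
    rw [Function.iterate_succ_apply, hfd, IH Q hQd x, hQn, Nat.factorial_succ]
    push_cast
    ring

/-- If `P` is an integer-valued rational polynomial with `P(0) = 0`, `deg P = p`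
(`p` an odd prime) and leading coefficient `1/((p-1)/2)!`, then `P(p)` is an integer
divisible by `p`. -/
theorem stmt13 {p : ℕ} (hp : p.Prime) (hodd : Odd p) (P : Polynomial ℚ)
    (hint : ∀ n : ℕ, ∃ m : ℤ, P.eval (n : ℚ) = (m : ℚ))
    (h0 : P.eval 0 = 0) (hdeg : P.natDegree = p)
    (hlead : P.leadingCoeff = 1 / (((p - 1) / 2).factorial : ℚ)) :
    ∃ m : ℤ, P.eval (p : ℚ) = (m : ℚ) ∧ (p : ℤ) ∣ m := by
  classical
  obtain ⟨f, hf⟩ := Classical.axiomOfChoice hint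
  -- the iterated forward differences at 0 are integers
  have hc : ∀ k : ℕ, ∃ ck : ℤ, (Δ_[1])^[k] (fun y : ℚ ↦ P.eval y) 0 = (ck : ℚ) := by
    intro k
    refine ⟨∑ j ∈ range (k + 1), (-1) ^ (k - j) * (k.choose j : ℤ) * f j, ?_⟩
    rw [fwdDiff_iter_eq_sum_shift]
    push_cast
    refine Finset.sum_congr rfl fun j _ => ?_
    rw [zsmul_eq_mul, zero_add, nsmul_eq_mul, mul_one, hf j]
    push_cast
    ring
  obtain ⟨c, hcc⟩ := Classical.axiomOfChoice hc
  set q : ℕ := (p - 1) / 2 with hqdef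
  have hqlt : q < p := by
    have := hp.two_le
    omega
  -- the Gregory–Newton formula
  have hsum : P.eval (p : ℚ) = ∑ k ∈ range (p + 1), (p.choose k : ℚ) * (c k : ℚ) := by
    have := shift_eq_sum_fwdDiff_iter (1 : ℚ) (fun y : ℚ ↦ P.eval y) p 0
    rw [zero_add, nsmul_eq_mul, mul_one] at this
    rw [this]
    refine Finset.sum_congr rfl fun k _ => ?_
    rw [hcc k, nsmul_eq_mul]
  -- c 0 = 0
  have hc0 : c 0 = 0 := by
    have : ((c 0 : ℤ) : ℚ) = 0 := by
      rw [← hcc 0]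
      simpa using h0
    exact_mod_cast this
  -- c p : p ∣ c p
  have hcp : (c p : ℚ) = (p.factorial : ℚ) * (1 / (q.factorial : ℚ)) := by
    rw [← hcc p, diff_iter_eval p P hdeg.le, ← hdeg, ← Polynomial.leadingCoeff, hlead]
  have hcpmul : c p * (q.factorial : ℤ) = (p.factorial : ℤ) := by
    have hq0 : (q.factorial : ℚ) ≠ 0 := by
      exact_mod_cast q.factorial_ne_zero
    have : ((c p * (q.factorial : ℤ) : ℤ) : ℚ) = ((p.factorial : ℤ) : ℚ) := by
      push_cast
      rw [hcp]
      field_simp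
    exact_mod_cast this
  have hpdvdcp : (p : ℤ) ∣ c p := by
    have hpp : Prime (p : ℤ) := Nat.prime_iff_prime_int.mp hp
    have h1 : (p : ℤ) ∣ c p * (q.factorial : ℤ) := by
      rw [hcpmul]
      exact_mod_cast Int.natCast_dvd_natCast.mpr (Nat.dvd_factorial hp.pos le_rfl)
    rcases hpp.dvd_mul.mp h1 with h | h
    · exact h
    · exfalso
      have : p ∣ q.factorial := Int.natCast_dvd_natCast.mp h
      have := (Nat.Prime.dvd_factorial hp).mp this
      omega
  refine ⟨∑ k ∈ range (p + 1), (p.choose k : ℤ) * c k, ?_, ?_⟩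
  · rw [hsum]
    push_cast
    rfl
  · refine Finset.dvd_sum fun k hk => ?_
    rcases eq_or_ne k 0 with rfl | hk0
    · simp [hc0]
    rcases eq_or_ne k p with rfl | hkp
    · exact Dvd.dvd.mul_left hpdvdcp _
    · have hklt : k < p := by
        have := Finset.mem_range.mp hk
        omega
      exact Dvd.dvd.mul_right
        (Int.natCast_dvd_natCast.mpr (Nat.Prime.dvd_choose_self hp hk0 hklt)) _
end

section
/- Let U be an associative ring of prime characteristic p (i.e. p·1 = 0 in U), let V ⊆ U be a commutative subring, and let u ∈ U be such that uv − vu ∈ V for every v ∈ V. Then for every v ∈ V: (vu)^p = v^p·u^p + D^{p-1}(v)·u, where D : U → U is the inner derivation D(w) = (vu)·w − w·(vu) and D^{p-1} denotes its (p-1)-fold iterate. -/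
open MvPolynomial

namespace Stmt14Aux

noncomputable def dR (p : ℕ) :
    Derivation (ZMod p) (MvPolynomial ℕ (ZMod p)) (MvPolynomial ℕ (ZMod p)) :=
  MvPolynomial.mkDerivation _ fun j => X (j + 1)

@[simp] lemma dR_X (p : ℕ) (j : ℕ) : dR p (X j) = X (j + 1) :=
  MvPolynomial.mkDerivation_X _ _ _

@[simp] lemma dR_C (p : ℕ) (r : ZMod p) : dR p (C r) = 0 := by
  rw [← MvPolynomial.algebraMap_eq]
  exact Derivation.map_algebraMap _ r

noncomputable def gU (p : ℕ) : ℕ → ℕ → MvPolynomial ℕ (ZMod p)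
  | 0, 0 => 1
  | 0, _ + 1 => 0
  | _ + 1, 0 => 0
  | n + 1, k + 1 => X 0 * dR p (gU p n (k + 1)) + X 0 * gU p n k

noncomputable def fU (p : ℕ) : ℕ → MvPolynomial ℕ (ZMod p)
  | 0 => X 0
  | m + 1 => X 0 * dR p (fU p m)

lemma gU_zero_right (p n : ℕ) : gU p (n + 1) 0 = 0 := by simp [gU]

lemma gU_eq_zero_of_lt (p : ℕ) : ∀ n k, n < k → gU p n k = 0 := by
  intro n
  induction n with
  | zero => intro k hk; match k, hk with
    | k + 1, _ => simp [gU]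
  | succ n ih =>
    intro k hk
    match k, hk with
    | k + 1, hk =>
      have h1 : gU p n (k + 1) = 0 := ih _ (by omega)
      have h2 : gU p n k = 0 := ih _ (by omega)
      simp [gU, h1, h2]

lemma gU_diag (p : ℕ) : ∀ n, gU p n n = X 0 ^ n := by
  intro n
  induction n with
  | zero => simp [gU]
  | succ n ih =>
    have h1 : gU p n (n + 1) = 0 := gU_eq_zero_of_lt p n (n + 1) (by omega)
    show gU p (n + 1) (n + 1) = X 0 ^ (n + 1)
    rw [show gU p (n + 1) (n + 1)
        = X 0 * dR p (gU p n (n + 1)) + X 0 * gU p n n from rfl, h1, ih]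
    simp [pow_succ, mul_comm]

lemma d_zero {A : Type*} [CommRing A] (d : A → A)
    (hadd : ∀ a b, d (a + b) = d a + d b) : d 0 = 0 := by
  have h := hadd 0 0
  rw [add_zero] at h
  exact (left_eq_add.mp h)

lemma d_natCast {A : Type*} [CommRing A] (d : A → A)
    (hadd : ∀ a b, d (a + b) = d a + d b)
    (hmul : ∀ a b, d (a * b) = a * d b + d a * b) :
    ∀ n : ℕ, d (n : A) = 0 := by
  have h1 : d 1 = 0 := by
    have h := hmul 1 1
    rw [mul_one, one_mul, mul_one] at h
    exact (left_eq_add.mp h)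
  intro n
  induction n with
  | zero => simpa using d_zero d hadd
  | succ n ih => rw [Nat.cast_succ, hadd, ih, h1, add_zero]

lemma compat {A : Type*} [CommRing A] (p : ℕ) [NeZero p]
    (φ : MvPolynomial ℕ (ZMod p) →+* A) (d : A → A)
    (hadd : ∀ a b, d (a + b) = d a + d b)
    (hmul : ∀ a b, d (a * b) = a * d b + d a * b)
    (hX : ∀ j, d (φ (X j)) = φ (X (j + 1))) :
    ∀ P, d (φ P) = φ (dR p P) := by
  intro P
  induction P using MvPolynomial.induction_on with
  | C r =>
    rw [dR_C, map_zero]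
    have : (C r : MvPolynomial ℕ (ZMod p)) = ((r.val : ℕ) : MvPolynomial ℕ (ZMod p)) := by
      rw [← map_natCast (C : ZMod p →+* MvPolynomial ℕ (ZMod p)) r.val, ZMod.natCast_val,
        ZMod.cast_id]
    rw [this, map_natCast]
    exact d_natCast d hadd hmul _
  | add P Q hP hQ => rw [map_add, hadd, hP, hQ, map_add, map_add]
  | mul_X P j hP =>
    rw [map_mul, hmul, hX, hP]
    simp only [Derivation.leibniz, smul_eq_mul, map_add, map_mul, dR_X]
    ring


end Stmt14Aux

namespace Stmt14Aux
open Finset in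
lemma expand {B : Type*} [Ring B] (p : ℕ)
    (α : MvPolynomial ℕ (ZMod p) →+* B) (x s : B)
    (hbase : x = α (X 0) * s)
    (hstep : ∀ P, x * α P = α (X 0 * dR p P) + α (X 0 * P) * s) :
    ∀ n, x ^ (n + 1) = ∑ k ∈ Finset.range (n + 2), α (gU p (n + 1) k) * s ^ k := by
  intro n
  induction n with
  | zero =>
    rw [Finset.sum_range_succ, Finset.sum_range_one]
    have h0 : gU p 1 0 = 0 := gU_zero_right p 0
    have h1 : gU p 1 1 = X 0 := by
      rw [show gU p 1 1 = X 0 * dR p (gU p 0 1) + X 0 * gU p 0 0 from rfl]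
      simp [gU]
    rw [h0, h1, map_zero, zero_mul, zero_add, pow_one, pow_one, hbase]
    rw [zero_add]
  | succ n ih =>
    have key : x ^ (n + 2) = x * x ^ (n + 1) := pow_succ' x (n+1)
    rw [key, ih, Finset.mul_sum]
    have step : ∀ k, x * (α (gU p (n + 1) k) * s ^ k)
        = α (X 0 * dR p (gU p (n + 1) k)) * s ^ k
          + α (X 0 * gU p (n + 1) k) * s ^ (k + 1) := by
      intro k
      rw [← mul_assoc, hstep, add_mul, mul_assoc, ← pow_succ']
    rw [Finset.sum_congr rfl (fun k _ => step k), Finset.sum_add_distrib]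
    -- target side
    have tgt : ∑ m ∈ Finset.range (n + 3), α (gU p (n + 2) m) * s ^ m
        = ∑ k ∈ Finset.range (n + 2), α (gU p (n + 2) (k + 1)) * s ^ (k + 1) := by
      rw [Finset.sum_range_succ']
      have : gU p (n + 2) 0 = 0 := gU_zero_right p (n + 1)
      rw [this, map_zero, zero_mul, add_zero]
    rw [tgt]
    have exp2 : ∀ k, gU p (n + 2) (k + 1)
        = X 0 * dR p (gU p (n + 1) (k + 1)) + X 0 * gU p (n + 1) k := fun k => rfl
    have split : ∑ k ∈ Finset.range (n + 2), α (gU p (n + 2) (k + 1)) * s ^ (k + 1)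
        = (∑ k ∈ Finset.range (n + 2), α (X 0 * dR p (gU p (n + 1) (k + 1))) * s ^ (k + 1))
          + ∑ k ∈ Finset.range (n + 2), α (X 0 * gU p (n + 1) k) * s ^ (k + 1) := by
      rw [← Finset.sum_add_distrib]
      refine Finset.sum_congr rfl fun k _ => ?_
      rw [exp2 k, map_add, add_mul]
    rw [split]
    congr 1
    -- Σ_{k∈range(n+2)} α(X0 * dR (g (n+1) k)) s^k = Σ_{k∈range(n+2)} α(X0 dR (g (n+1) (k+1)))s^(k+1)
    have last0 : gU p (n + 1) 0 = 0 := gU_zero_right p n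
    have top0 : gU p (n + 1) (n + 2) = 0 := gU_eq_zero_of_lt p (n + 1) (n + 2) (by omega)
    rw [Finset.sum_range_succ' (fun k => α (X 0 * dR p (gU p (n + 1) k)) * s ^ k) (n + 1),
      Finset.sum_range_succ (fun k => α (X 0 * dR p (gU p (n + 1) (k + 1))) * s ^ (k + 1)) (n + 1),
      last0, top0]
    simp
end Stmt14Aux

namespace Stmt14Aux
open MvPolynomial

lemma X_mem_supp (p : ℕ) {n j : ℕ} (h : j < n) :
    (X j : MvPolynomial ℕ (ZMod p)) ∈ supported (ZMod p) (Set.Iio n) := by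
  rw [supported_eq_adjoin_X]
  exact Algebra.subset_adjoin ⟨j, h, rfl⟩

lemma dR_supported (p n : ℕ) {P : MvPolynomial ℕ (ZMod p)}
    (hP : P ∈ supported (ZMod p) (Set.Iio n)) :
    dR p P ∈ supported (ZMod p) (Set.Iio (n + 1)) := by
  have hmono : supported (ZMod p) (Set.Iio n) ≤ supported (ZMod p) (Set.Iio (n + 1)) :=
    supported_mono (fun j hj => lt_trans hj (Nat.lt_succ_self n))
  rw [supported_eq_adjoin_X] at hP
  induction hP using Algebra.adjoin_induction with
  | mem x hx =>
    obtain ⟨j, hj, rfl⟩ := hx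
    rw [dR_X]
    exact X_mem_supp p (Nat.add_lt_add_right hj 1)
  | algebraMap r =>
    rw [Derivation.map_algebraMap]
    exact Subalgebra.zero_mem _
  | add x y hx hy ihx ihy =>
    rw [map_add]; exact Subalgebra.add_mem _ ihx ihy
  | mul x y hx hy ihx ihy =>
    rw [Derivation.leibniz, smul_eq_mul, smul_eq_mul]
    have hx' : x ∈ supported (ZMod p) (Set.Iio (n + 1)) := by
      apply hmono; rw [supported_eq_adjoin_X]; exact hx
    have hy' : y ∈ supported (ZMod p) (Set.Iio (n + 1)) := by
      apply hmono; rw [supported_eq_adjoin_X]; exact hy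
    exact Subalgebra.add_mem _ (Subalgebra.mul_mem _ hx' ihy) (Subalgebra.mul_mem _ hy' ihx)

lemma gU_supported (p : ℕ) : ∀ n k, gU p n (k + 1) ∈ supported (ZMod p) (Set.Iio n) := by
  intro n
  induction n with
  | zero => intro k; rw [show gU p 0 (k + 1) = 0 from rfl]; exact Subalgebra.zero_mem _
  | succ n ih =>
    intro k
    rw [show gU p (n + 1) (k + 1)
        = X 0 * dR p (gU p n (k + 1)) + X 0 * gU p n k from rfl]
    have hX0 : (X 0 : MvPolynomial ℕ (ZMod p)) ∈ supported (ZMod p) (Set.Iio (n + 1)) :=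
      X_mem_supp p (Nat.succ_pos n)
    have hmono : supported (ZMod p) (Set.Iio n) ≤ supported (ZMod p) (Set.Iio (n + 1)) :=
      supported_mono (fun j hj => lt_trans hj (Nat.lt_succ_self n))
    have h1 : dR p (gU p n (k + 1)) ∈ supported (ZMod p) (Set.Iio (n + 1)) :=
      dR_supported p n (ih k)
    have h2 : gU p n k ∈ supported (ZMod p) (Set.Iio (n + 1)) := by
      match k with
      | 0 =>
        match n with
        | 0 => rw [show gU p 0 0 = 1 from rfl]; exact Subalgebra.one_mem _
        | m + 1 => rw [gU_zero_right]; exact Subalgebra.zero_mem _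
      | k' + 1 => exact hmono (ih k')
    exact Subalgebra.add_mem _ (Subalgebra.mul_mem _ hX0 h1) (Subalgebra.mul_mem _ hX0 h2)

lemma fU_supported (p : ℕ) : ∀ m, fU p m ∈ supported (ZMod p) (Set.Iio (m + 1)) := by
  intro m
  induction m with
  | zero => rw [show fU p 0 = X 0 from rfl]; exact X_mem_supp p Nat.one_pos
  | succ m ih =>
    rw [show fU p (m + 1) = X 0 * dR p (fU p m) from rfl]
    exact Subalgebra.mul_mem _ (X_mem_supp p (Nat.succ_pos _)) (dR_supported p (m + 1) ih)

end Stmt14Aux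

namespace Stmt14Aux
open Polynomial
variable (p : ℕ) [Fact (Nat.Prime p)]

local notation "R" => MvPolynomial ℕ (ZMod p)
local notation "W" => Polynomial (MvPolynomial ℕ (ZMod p))

noncomputable def vW : Polynomial (MvPolynomial ℕ (ZMod p)) :=
  ∑ i ∈ Finset.range p,
    Polynomial.C (MvPolynomial.C ((i.factorial : ZMod p)⁻¹) * MvPolynomial.X i)
      * Polynomial.X ^ i

noncomputable def ψ : MvPolynomial ℕ (ZMod p) →+* Polynomial (MvPolynomial ℕ (ZMod p)) :=
  MvPolynomial.eval₂Hom ((Polynomial.C : R →+* W).comp (MvPolynomial.C : ZMod p →+* R))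
    (fun j => (⇑Polynomial.derivative)^[j] (vW p))

@[simp] lemma ψ_X (j : ℕ) : ψ p (X j) = (⇑Polynomial.derivative)^[j] (vW p) := by
  simp [ψ]

noncomputable def Mop : W →ₐ[ZMod p] Module.End (ZMod p) W := Algebra.lmul (ZMod p) W

noncomputable def dL : Module.End (ZMod p) W :=
  (Polynomial.derivative : W →ₗ[R] W).restrictScalars (ZMod p)

@[simp] lemma dL_apply (q : W) : dL p q = Polynomial.derivative q := rfl

@[simp] lemma Mop_apply (c q : W) : Mop p c q = c * q := rfl

noncomputable def Xe : Module.End (ZMod p) W := Mop p (vW p) * dL p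

lemma Xe_apply (q : W) : Xe p q = vW p * Polynomial.derivative q := rfl


end Stmt14Aux
namespace Stmt14Aux
open Polynomial
variable (p : ℕ) [Fact (Nat.Prime p)]

local notation "R" => MvPolynomial ℕ (ZMod p)
local notation "W" => Polynomial (MvPolynomial ℕ (ZMod p))

lemma ψ_compat : ∀ P, Polynomial.derivative (ψ p P) = ψ p (dR p P) := by
  have hne : NeZero p := ⟨(Fact.out : Nat.Prime p).ne_zero⟩
  exact compat p (ψ p) (fun q => Polynomial.derivative q)
    (fun a b => by simp)
    (fun a b => by
      show Polynomial.derivative (a * b) = _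
      rw [Polynomial.derivative_mul]; ring)
    (fun j => by
      show Polynomial.derivative (ψ p (X j)) = _
      rw [ψ_X, ψ_X, ← Function.iterate_succ_apply' (⇑Polynomial.derivative)])

lemma hbaseW : Xe p = ((Mop p).toRingHom.comp (ψ p)) (X 0) * dL p := by
  simp only [RingHom.comp_apply, AlgHom.toRingHom_eq_coe, RingHom.coe_coe, ψ_X,
    Function.iterate_zero, id_eq]
  rfl

lemma hstepW : ∀ P, Xe p * ((Mop p).toRingHom.comp (ψ p)) P
    = ((Mop p).toRingHom.comp (ψ p)) (X 0 * dR p P)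
      + ((Mop p).toRingHom.comp (ψ p)) (X 0 * P) * dL p := by
  intro P
  apply LinearMap.ext
  intro q
  simp only [AlgHom.toRingHom_eq_coe, RingHom.comp_apply, RingHom.coe_coe,
    Module.End.mul_apply, LinearMap.add_apply, Mop_apply, dL_apply, Xe_apply, map_mul, ψ_X,
    Function.iterate_zero, id_eq]
  rw [Polynomial.derivative_mul, ← ψ_compat]
  ring

end Stmt14Aux
namespace Stmt14Aux
open Polynomial
variable (p : ℕ) [Fact (Nat.Prime p)]

local notation "R" => MvPolynomial ℕ (ZMod p)
local notation "W" => Polynomial (MvPolynomial ℕ (ZMod p))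
local notation "E'" => Module.End (ZMod p) (Polynomial (MvPolynomial ℕ (ZMod p)))

lemma Xe_leibniz (c q : W) : Xe p (c * q) = c * Xe p q + Xe p c * q := by
  simp only [Xe_apply, Polynomial.derivative_mul]
  ring

lemma adXe (c : W) : Xe p * Mop p c - Mop p c * Xe p = Mop p (Xe p c) := by
  apply LinearMap.ext
  intro q
  simp only [LinearMap.sub_apply, Module.End.mul_apply, Mop_apply]
  rw [Xe_leibniz]
  ring

instance : Nontrivial E' := by
  refine nontrivial_of_ne 1 0 fun h => ?_
  have h2 : (1 : W) = 0 := by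
    calc (1 : W) = (1 : E') (1 : W) := rfl
    _ = (0 : E') (1 : W) := by rw [h]
    _ = 0 := rfl
  exact one_ne_zero h2

lemma ad_pow_char {B : Type*} [Ring B] [Algebra (ZMod p) B] [Nontrivial B]
    (ξ : B) (Z : B) :
    (fun z : B => ξ * z - z * ξ)^[p] Z = ξ ^ p * Z - Z * ξ ^ p := by
  haveI : CharP (Module.End (ZMod p) B) p :=
    charP_of_injective_algebraMap
      (RingHom.injective (algebraMap (ZMod p) (Module.End (ZMod p) B))) p
  set L : Module.End (ZMod p) B := LinearMap.mulLeft (ZMod p) ξ with hL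
  set Rr : Module.End (ZMod p) B := LinearMap.mulRight (ZMod p) ξ with hR
  have hc : Commute L Rr := LinearMap.commute_mulLeft_right _ _
  have hsub : (L - Rr) ^ p = L ^ p - Rr ^ p := sub_pow_char_of_commute p hc
  have hfun : ⇑(L - Rr) = (fun z : B => ξ * z - z * ξ) := by
    funext z
    simp [hL, hR]
  rw [← hfun, ← Module.End.pow_apply, hsub]
  have hLp : L ^ p = LinearMap.mulLeft (ZMod p) (ξ ^ p) := by
    rw [hL, LinearMap.pow_mulLeft]
  have hRp : Rr ^ p = LinearMap.mulRight (ZMod p) (ξ ^ p) := by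
    rw [hR, LinearMap.pow_mulRight]
  rw [hLp, hRp]
  simp

lemma pow_leibniz (c q : W) :
    (Xe p ^ p) (c * q) = c * (Xe p ^ p) q + (Xe p ^ p) c * q := by
  have had : ∀ (k : ℕ) (c : W),
      (fun Z : E' => Xe p * Z - Z * Xe p)^[k] (Mop p c) = Mop p ((Xe p ^ k) c) := by
    intro k
    induction k with
    | zero => intro c; simp
    | succ k ih =>
      intro c
      rw [Function.iterate_succ_apply, adXe, ih, pow_succ, Module.End.mul_apply]
  have key : Mop p ((Xe p ^ p) c) = Xe p ^ p * Mop p c - Mop p c * Xe p ^ p := by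
    rw [← had p c]
    exact ad_pow_char p (Xe p) ((Mop p) c)
  have := congrArg (fun f : E' => f q) key
  simp only [Mop_apply, LinearMap.sub_apply, Module.End.mul_apply] at this
  rw [this]
  ring

end Stmt14Aux

namespace Stmt14Aux
open Polynomial
variable (p : ℕ) [Fact (Nat.Prime p)]

local notation "R" => MvPolynomial ℕ (ZMod p)
local notation "W" => Polynomial (MvPolynomial ℕ (ZMod p))
local notation "E'" => Module.End (ZMod p) (Polynomial (MvPolynomial ℕ (ZMod p)))

lemma hp1 : p - 1 + 1 = p := Nat.succ_pred_eq_of_pos (Fact.out : Nat.Prime p).pos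

lemma Xe_pow_C (k : ℕ) (c : R) : (Xe p ^ (k + 1)) (Polynomial.C c) = 0 := by
  induction k with
  | zero => simp [Xe_apply]
  | succ k ih => rw [pow_succ', Module.End.mul_apply, ih, map_zero]

lemma Ep_C (c : R) : (Xe p ^ p) (Polynomial.C c) = 0 := by
  have h := Xe_pow_C p (p - 1) c
  rwa [hp1 p] at h

lemma Ep_pow_X : ∀ m : ℕ, (Xe p ^ p) (Polynomial.X ^ (m + 1))
    = ((m + 1 : ℕ) : W) * Polynomial.X ^ m * (Xe p ^ p) Polynomial.X := by
  intro m
  induction m with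
  | zero => simp
  | succ m ih =>
    have : (Polynomial.X : W) ^ (m + 2) = Polynomial.X ^ (m + 1) * Polynomial.X := by
      rw [← pow_succ]
    rw [this, pow_leibniz, ih]
    push_cast
    ring

lemma Ep_eq (q : W) :
    (Xe p ^ p) q = (Xe p ^ p) Polynomial.X * Polynomial.derivative q := by
  have hone : (Xe p ^ p) (1 : W) = 0 := by
    rw [show (1 : W) = Polynomial.C 1 from (map_one Polynomial.C).symm]
    exact Ep_C p 1
  induction q using Polynomial.induction_on' with
  | add f g hf hg => rw [map_add, hf, hg, derivative_add, mul_add]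
  | monomial n a =>
    rw [← Polynomial.C_mul_X_pow_eq_monomial]
    match n with
    | 0 =>
      rw [pow_zero, mul_one]
      simp [Ep_C]
    | n + 1 =>
      rw [pow_leibniz, Ep_C, Ep_pow_X]
      rw [derivative_mul, derivative_C]
      rw [Polynomial.derivative_X_pow]
      simp only [map_add, map_one, map_natCast, Nat.add_sub_cancel]
      push_cast
      ring

lemma expand_W (q : W) : (Xe p ^ p) q
    = ∑ k ∈ Finset.range (p + 1), ψ p (gU p p k) * (⇑Polynomial.derivative)^[k] q := by
  have hp2 : p - 1 + 2 = p + 1 := by have := hp1 p; omega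
  have hexp := expand p ((Mop p).toRingHom.comp (ψ p)) (Xe p) (dL p)
    (hbaseW p) (hstepW p) (p - 1)
  rw [hp1 p, hp2] at hexp
  have := congrArg (fun f : E' => f q) hexp
  rw [this, LinearMap.sum_apply]
  refine Finset.sum_congr rfl fun k _ => ?_
  rw [Module.End.mul_apply, Module.End.pow_apply]
  have hdL : ⇑(dL p) = ⇑(Polynomial.derivative : W →ₗ[R] W) :=
    funext fun q => dL_apply p q
  rw [hdL]
  rfl

lemma psi_fU : ∀ m, (Xe p ^ m) (vW p) = ψ p (fU p m) := by
  intro m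
  induction m with
  | zero => rw [pow_zero]; rw [show fU p 0 = X 0 from rfl, ψ_X]; rfl
  | succ m ih =>
    rw [pow_succ', Module.End.mul_apply, ih]
    rw [show fU p (m + 1) = X 0 * dR p (fU p m) from rfl, map_mul, ψ_X]
    rw [Xe_apply, ψ_compat]
    simp

lemma EpX : (Xe p ^ p) Polynomial.X = ψ p (fU p (p - 1)) := by
  have hpow : Xe p ^ p = Xe p ^ (p - 1) * Xe p := by rw [← pow_succ, hp1 p]
  rw [hpow, Module.End.mul_apply]
  have : Xe p (Polynomial.X : W) = vW p := by
    rw [Xe_apply, Polynomial.derivative_X, mul_one]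
  rw [this, psi_fU]

lemma gUp0 : gU p p 0 = 0 := by
  have h := gU_zero_right p (p - 1)
  rwa [hp1 p] at h

lemma key1 : ψ p (gU p p 1) = ψ p (fU p (p - 1)) := by
  have h := expand_W p Polynomial.X
  rw [EpX] at h
  have hs : ∑ k ∈ Finset.range (p + 1),
      ψ p (gU p p k) * (⇑Polynomial.derivative)^[k] (Polynomial.X : W)
      = ψ p (gU p p 1) * (⇑Polynomial.derivative)^[1] (Polynomial.X : W) := by
    apply Finset.sum_eq_single_of_mem 1
    · refine Finset.mem_range.mpr ?_
      have := (Fact.out : Nat.Prime p).two_le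
      omega
    · intro b _ hb
      match b, hb with
      | 0, _ => rw [gUp0 p, map_zero, zero_mul]
      | b + 2, _ =>
        have hz : (⇑(Polynomial.derivative : W →ₗ[R] W))^[b + 2]
            (Polynomial.X : W) = 0 :=
          iterate_derivative_eq_zero (by rw [natDegree_X]; omega)
        rw [hz, mul_zero]
  rw [hs] at h
  simp only [Function.iterate_one, Polynomial.derivative_X, mul_one] at h
  exact h.symm

end Stmt14Aux

namespace Stmt14Aux
open Polynomial
variable (p : ℕ) [Fact (Nat.Prime p)]

local notation "R" => MvPolynomial ℕ (ZMod p)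
local notation "W" => Polynomial (MvPolynomial ℕ (ZMod p))

lemma factorial_ne_zero_zmod {m : ℕ} (hmp : m < p) : ((m.factorial : ZMod p)) ≠ 0 := by
  rw [Ne, ZMod.natCast_eq_zero_iff]
  intro hdvd
  have := ((Fact.out : Nat.Prime p).dvd_factorial).mp hdvd
  omega

lemma cc_X_pow (k : ℕ) (hk : k ≠ 0) :
    Polynomial.constantCoeff ((Polynomial.X : W) ^ k) = 0 := by
  rw [Polynomial.constantCoeff_apply, Polynomial.coeff_X_pow]
  simp [Ne.symm hk]

lemma key2 (m : ℕ) (h2 : 2 ≤ m) (hmp : m < p) :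
    Polynomial.constantCoeff (ψ p (gU p p m)) = 0 := by
  have h := expand_W p (Polynomial.X ^ m)
  rw [Ep_eq, EpX] at h
  have hc := congrArg (Polynomial.constantCoeff : W →+* MvPolynomial ℕ (ZMod p)) h
  rw [map_sum, map_mul] at hc
  -- LHS is zero
  have hL : (Polynomial.constantCoeff : W →+* MvPolynomial ℕ (ZMod p))
      (Polynomial.derivative ((Polynomial.X : W) ^ m)) = 0 := by
    rw [Polynomial.derivative_X_pow, map_mul]
    rw [cc_X_pow p (m - 1) (by omega), mul_zero]
  rw [hL, mul_zero] at hc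
  -- RHS collapses to the k = m term
  have hsingle : ∑ k ∈ Finset.range (p + 1),
      (Polynomial.constantCoeff : W →+* MvPolynomial ℕ (ZMod p))
        (ψ p (gU p p k) * (⇑Polynomial.derivative)^[k] ((Polynomial.X : W) ^ m))
      = Polynomial.constantCoeff (ψ p (gU p p m))
          * Polynomial.constantCoeff ((⇑Polynomial.derivative)^[m] ((Polynomial.X : W) ^ m)) := by
    rw [Finset.sum_eq_single_of_mem m (Finset.mem_range.mpr (by omega))]
    · rw [map_mul]
    · intro b _ hb
      rw [map_mul, Polynomial.iterate_derivative_X_pow_eq_smul]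
      rcases lt_or_gt_of_ne hb with hlt | hgt
      · -- b < m : constant coeff of X^(m-b) is zero
        rw [Polynomial.smul_eq_C_mul, map_mul, cc_X_pow p (m - b) (by omega)]
        simp
      · -- b > m : descFactorial is zero
        rw [Nat.descFactorial_eq_zero_iff_lt.mpr hgt]
        simp
  rw [hsingle] at hc
  have hmm : Polynomial.constantCoeff ((⇑Polynomial.derivative)^[m] ((Polynomial.X : W) ^ m))
      = ((m.factorial : ℕ) : MvPolynomial ℕ (ZMod p)) := by
    rw [Polynomial.iterate_derivative_X_pow_eq_smul, Nat.sub_self, pow_zero,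
      Nat.descFactorial_self, Polynomial.smul_eq_C_mul, mul_one]
    simp
  rw [hmm] at hc
  -- now 0 = cc(ψ g) * m! in a domain
  have hfac : ((m.factorial : ℕ) : MvPolynomial ℕ (ZMod p)) ≠ 0 := by
    rw [← map_natCast (MvPolynomial.C : ZMod p →+* MvPolynomial ℕ (ZMod p))]
    simp only [Ne, MvPolynomial.C_eq_zero]
    exact factorial_ne_zero_zmod p hmp
  rcases mul_eq_zero.mp hc.symm with h' | h'
  · exact h'
  · exact absurd h' hfac

end Stmt14Aux

namespace Stmt14Aux
open Polynomial
variable (p : ℕ) [Fact (Nat.Prime p)]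

local notation "R" => MvPolynomial ℕ (ZMod p)
local notation "W" => Polynomial (MvPolynomial ℕ (ZMod p))

lemma theta_X (j : ℕ) (hj : j < p) :
    Polynomial.constantCoeff (ψ p (MvPolynomial.X j)) = MvPolynomial.X j := by
  rw [ψ_X]
  have h1 : (⇑(Polynomial.derivative : W →ₗ[R] W))^[j] (vW p)
      = ((Polynomial.derivative : W →ₗ[R] W) ^ j) (vW p) :=
    (Module.End.pow_apply _ j _).symm
  rw [h1, vW, map_sum, map_sum]
  have hterm : ∀ i, Polynomial.constantCoeff
      (((Polynomial.derivative : W →ₗ[R] W) ^ j)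
        (Polynomial.C (MvPolynomial.C ((i.factorial : ZMod p)⁻¹) * MvPolynomial.X i)
          * Polynomial.X ^ i))
      = (MvPolynomial.C ((i.factorial : ZMod p)⁻¹) * MvPolynomial.X i)
        * ((i.descFactorial j : MvPolynomial ℕ (ZMod p)))
        * Polynomial.constantCoeff ((Polynomial.X : W) ^ (i - j)) := by
    intro i
    rw [← Polynomial.smul_eq_C_mul, map_smul, Module.End.pow_apply,
      Polynomial.iterate_derivative_X_pow_eq_smul]
    have hC : ∀ c : MvPolynomial ℕ (ZMod p),
        Polynomial.constantCoeff (Polynomial.C c) = c := fun c => by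
      rw [Polynomial.constantCoeff_apply, Polynomial.coeff_C_zero]
    rw [Polynomial.smul_eq_C_mul, Polynomial.smul_eq_C_mul]
    simp only [map_mul, hC]
    ring
  rw [Finset.sum_congr rfl fun i _ => hterm i]
  rw [Finset.sum_eq_single_of_mem j (Finset.mem_range.mpr hj)]
  · rw [Nat.sub_self, pow_zero, map_one, mul_one, Nat.descFactorial_self]
    rw [← map_natCast (MvPolynomial.C : ZMod p →+* MvPolynomial ℕ (ZMod p))]
    rw [mul_comm (MvPolynomial.C ((j.factorial : ZMod p)⁻¹)) (MvPolynomial.X j), mul_assoc,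
      ← map_mul]
    rw [inv_mul_cancel₀ (factorial_ne_zero_zmod p hj), map_one, mul_one]
  · intro i _ hij
    rcases lt_or_gt_of_ne hij with hlt | hgt
    · rw [Nat.descFactorial_eq_zero_iff_lt.mpr hlt]
      simp
    · rw [cc_X_pow p (i - j) (by omega), mul_zero]

lemma theta_fix {P : MvPolynomial ℕ (ZMod p)}
    (hP : P ∈ MvPolynomial.supported (ZMod p) (Set.Iio p)) :
    Polynomial.constantCoeff (ψ p P) = P := by
  rw [supported_eq_adjoin_X] at hP
  induction hP using Algebra.adjoin_induction with
  | mem x hx =>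
    obtain ⟨j, hj, rfl⟩ := hx
    exact theta_X p j hj
  | algebraMap r =>
    rw [MvPolynomial.algebraMap_eq]
    have : ψ p (MvPolynomial.C r) = Polynomial.C (MvPolynomial.C r) := by
      simp [ψ]
    rw [this, Polynomial.constantCoeff_apply, Polynomial.coeff_C_zero]
  | add x y hx hy ihx ihy => rw [map_add, map_add, ihx, ihy]
  | mul x y hx hy ihx ihy => rw [map_mul, map_mul, ihx, ihy]

lemma core_mid (m : ℕ) (h2 : 2 ≤ m) (hmp : m < p) : gU p p m = 0 := by
  have h := key2 p m h2 hmp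
  have hmem : gU p p m ∈ MvPolynomial.supported (ZMod p) (Set.Iio p) := by
    have := gU_supported p p (m - 1)
    rwa [show m - 1 + 1 = m by omega] at this
  rwa [theta_fix p hmem] at h

lemma core_one : gU p p 1 = fU p (p - 1) := by
  have h := congrArg (Polynomial.constantCoeff : W →+* MvPolynomial ℕ (ZMod p)) (key1 p)
  have hmem1 : gU p p 1 ∈ MvPolynomial.supported (ZMod p) (Set.Iio p) := gU_supported p p 0
  have hmem2 : fU p (p - 1) ∈ MvPolynomial.supported (ZMod p) (Set.Iio p) := by
    have := fU_supported p (p - 1)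
    rwa [hp1 p] at this
  rw [theta_fix p hmem1, theta_fix p hmem2] at h
  exact h

end Stmt14Aux

open Stmt14Aux in
/-- Hochschild's Lemma: if `U` is an associative ring of prime characteristic `p`,
`V ⊆ U` a commutative subring, and `u ∈ U` satisfies `uv − vu ∈ V` for all `v ∈ V`,
then `(vu)^p = v^p u^p + D^{p-1}(v) u`, where `D(w) = (vu)w − w(vu)`. -/
theorem stmt14 {U : Type*} [Ring U] {p : ℕ} (hp : p.Prime) [CharP U p]
    (V : Subring U) (hcomm : ∀ a ∈ V, ∀ b ∈ V, a * b = b * a)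
    (u : U) (hu : ∀ v ∈ V, u * v - v * u ∈ V) :
    ∀ v ∈ V, (v * u) ^ p =
      v ^ p * u ^ p + (fun w => v * u * w - w * (v * u))^[p - 1] v * u := by
  intro v hv
  haveI : Fact (Nat.Prime p) := ⟨hp⟩
  haveI : NeZero p := ⟨hp.ne_zero⟩
  haveI hVchar : CharP ↥V p := inferInstance
  letI commV : CommRing ↥V :=
    { (inferInstance : Ring ↥V) with
      mul_comm := fun a b => Subtype.ext (hcomm a.1 a.2 b.1 b.2) }
  let δV : ↥V → ↥V := fun a => ⟨u * a.1 - a.1 * u, hu a.1 a.2⟩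
  let φ : MvPolynomial ℕ (ZMod p) →+* ↥V :=
    MvPolynomial.eval₂Hom (ZMod.castHom dvd_rfl ↥V) (fun j => δV^[j] ⟨v, hv⟩)
  let α : MvPolynomial ℕ (ZMod p) →+* U := (V.subtype).comp φ
  have hδadd : ∀ a b : ↥V, δV (a + b) = δV a + δV b := by
    intro a b
    apply Subtype.ext
    show u * (a.1 + b.1) - (a.1 + b.1) * u = (u * a.1 - a.1 * u) + (u * b.1 - b.1 * u)
    noncomm_ring
  have hδmul : ∀ a b : ↥V, δV (a * b) = a * δV b + δV a * b := by
    intro a b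
    apply Subtype.ext
    show u * (a.1 * b.1) - (a.1 * b.1) * u
      = a.1 * (u * b.1 - b.1 * u) + (u * a.1 - a.1 * u) * b.1
    noncomm_ring
  have hφX : ∀ j, φ (MvPolynomial.X j) = δV^[j] ⟨v, hv⟩ := fun j =>
    MvPolynomial.eval₂Hom_X' _ _ _
  have hcompat : ∀ P, δV (φ P) = φ (dR p P) := by
    refine compat p φ δV hδadd hδmul ?_
    intro j
    rw [hφX, hφX, ← Function.iterate_succ_apply' δV]
  have hαX0 : α (MvPolynomial.X 0) = v := by
    show (φ (MvPolynomial.X 0) : U) = v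
    rw [hφX]
    rfl
  have hδcoe : ∀ a : ↥V, ((δV a : ↥V) : U) = u * a.1 - a.1 * u := fun a => rfl
  have hbase : v * u = α (MvPolynomial.X 0) * u := by rw [hαX0]
  have hstep : ∀ P, (v * u) * α P
      = α (MvPolynomial.X 0 * dR p P) + α (MvPolynomial.X 0 * P) * u := by
    intro P
    rw [map_mul, map_mul, hαX0]
    have h1 : α (dR p P) = u * (φ P).1 - (φ P).1 * u := by
      show (φ (dR p P) : U) = _
      rw [← hcompat P]
    have h2 : α P = (φ P).1 := rfl
    rw [h1, h2]
    noncomm_ring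
  have e1 : p - 1 + 1 = p := Nat.succ_pred_eq_of_pos hp.pos
  have e2 : p - 1 + 2 = p + 1 := by omega
  have hexp := expand p α (v * u) u hbase hstep (p - 1)
  rw [e1, e2] at hexp
  -- evaluate the sum
  rw [Finset.sum_range_succ] at hexp
  have htop : α (gU p p p) * u ^ p = v ^ p * u ^ p := by
    rw [gU_diag, map_pow, hαX0]
  rw [htop] at hexp
  have hrest : ∑ k ∈ Finset.range p, α (gU p p k) * u ^ k
      = α (fU p (p - 1)) * u := by
    rw [Finset.sum_eq_single_of_mem 1 (Finset.mem_range.mpr (by have := hp.two_le; omega))]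
    · rw [core_one, pow_one]
    · intro b hb hb1
      match b, hb1 with
      | 0, _ => rw [gUp0, map_zero, zero_mul]
      | b + 2, _ =>
        rw [core_mid p (b + 2) (by omega) (Finset.mem_range.mp hb), map_zero, zero_mul]
  rw [hrest] at hexp
  -- identify the iterate
  have hD : ∀ m, (fun w => v * u * w - w * (v * u))^[m] v = α (fU p m) := by
    intro m
    induction m with
    | zero =>
      rw [Function.iterate_zero, id_eq]
      exact hαX0.symm
    | succ m ih =>
      rw [Function.iterate_succ_apply', ih]
      have : α (fU p (m + 1)) = v * (u * (φ (fU p m)).1 - (φ (fU p m)).1 * u) := by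
        rw [show fU p (m + 1) = MvPolynomial.X 0 * dR p (fU p m) from rfl, map_mul, hαX0]
        congr 1
        show (φ (dR p (fU p m)) : U) = _
        rw [← hcompat]
      rw [this]
      have hα : α (fU p m) = (φ (fU p m)).1 := rfl
      rw [hα]
      have hcm : (φ (fU p m)).1 * v = v * (φ (fU p m)).1 :=
        hcomm _ (φ (fU p m)).2 v hv
      have hassoc : (φ (fU p m)).1 * (v * u) = ((φ (fU p m)).1 * v) * u :=
        (mul_assoc _ _ _).symm
      show v * u * (φ (fU p m)).1 - (φ (fU p m)).1 * (v * u)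
          = v * (u * (φ (fU p m)).1 - (φ (fU p m)).1 * u)
      rw [hassoc, hcm]
      noncomm_ring
  rw [hD (p - 1)]
  rw [hexp, add_comm]
end

section
/- Let k be a field of characteristic p, where p ≥ 3 is a prime, let A be a commutative k-algebra, let a ∈ A, and let D : A → A be a k-linear derivation. Then, as k-linear endomorphisms of A, (L_a ∘ D)^p = L_{a^p} ∘ D^p + L_{(L_a ∘ D)^{p-1}(a)} ∘ D, where L_b denotes multiplication by b ∈ A and powers denote iterated composition; equivalently, (aD)^p = a^p·D^p + ((aD)^{p-1}(a))·D. -/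
open Finset Polynomial

section Helpers

variable {k : Type*} [CommRing k] {R : Type*} [CommRing R] [Algebra k R]

private theorem iterLeibniz (d : Derivation k R R) (n : ℕ) (x y : R) :
    d^[n] (x * y) = ∑ j ∈ range (n+1), n.choose j • (d^[n-j] x * d^[j] y) := by
  induction n with
  | zero => simp
  | succ n IH =>
    calc
      (⇑d)^[n + 1] (x * y) =
          d (∑ j ∈ range n.succ, n.choose j • (d^[n - j] x * d^[j] y)) := by
        rw [Function.iterate_succ_apply', IH]
      _ = (∑ j ∈ range n.succ, n.choose j • (d^[n - j + 1] x * d^[j] y)) +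
          ∑ j ∈ range n.succ, n.choose j • (d^[n - j] x * d^[j + 1] y) := by
        rw [map_sum]
        simp_rw [map_nsmul, d.leibniz, smul_eq_mul, smul_add, sum_add_distrib,
          Function.iterate_succ_apply']
        rw [add_comm]
        congr 1 <;> refine sum_congr rfl fun j _ => by ring_nf
      _ = (∑ j ∈ range n.succ, n.choose j.succ • (d^[n - j] x * d^[j + 1] y)) +
            1 • (d^[n + 1] x * (⇑d)^[0] y) +
          ∑ j ∈ range n.succ, n.choose j • (d^[n - j] x * d^[j + 1] y) := ?_
      _ = ((∑ j ∈ range n.succ, n.choose j • (d^[n - j] x * d^[j + 1] y)) +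
            ∑ j ∈ range n.succ, n.choose j.succ • (d^[n - j] x * d^[j + 1] y)) +
            1 • (d^[n + 1] x * (⇑d)^[0] y) := by
        rw [add_comm, add_assoc]
      _ = (∑ i ∈ range n.succ,
              (n + 1).choose (i + 1) • (d^[n + 1 - (i + 1)] x * d^[i + 1] y)) +
            1 • (d^[n + 1] x * (⇑d)^[0] y) := by
        simp_rw [Nat.choose_succ_succ, Nat.succ_sub_succ, add_smul, sum_add_distrib]
      _ = ∑ j ∈ range n.succ.succ, n.succ.choose j • (d^[n.succ - j] x * d^[j] y) := by
        rw [sum_range_succ' _ n.succ, Nat.choose_zero_right, tsub_zero]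
    congr
    refine (sum_range_succ' _ _).trans (congr_arg₂ (· + ·) ?_ ?_)
    · rw [sum_range_succ, Nat.choose_succ_self, zero_smul, add_zero]
      refine sum_congr rfl fun j hj => ?_
      rw [mem_range] at hj
      congr
      omega
    · rw [Nat.choose_zero_right, tsub_zero]

private noncomputable def cc (d : Derivation k R R) (u : R) : ℕ → ℕ → R
  | 0, 0 => 1
  | 0, _+1 => 0
  | n+1, 0 => u * d (cc d u n 0)
  | n+1, i+1 => u * d (cc d u n (i+1)) + u * cc d u n i

variable (d : Derivation k R R) (u : R)

private theorem smul_deriv_apply (x : R) : (u • d) x = u * d x := by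
  rw [Derivation.smul_apply, smul_eq_mul]

private theorem cc_zero_right : ∀ n, cc d u (n+1) 0 = 0 := by
  intro n
  induction n with
  | zero => show u * d (cc d u 0 0) = 0; show u * d 1 = 0; rw [d.map_one_eq_zero, mul_zero]
  | succ m ih => show u * d (cc d u (m+1) 0) = 0; rw [ih, map_zero, mul_zero]

private theorem cc_gt : ∀ n i, n < i → cc d u n i = 0 := by
  intro n
  induction n with
  | zero => intro i hi
            match i, hi with
            | j+1, _ => rfl
  | succ m ih =>
    intro i hi
    match i, hi with
    | j+1, hi =>
      show u * d (cc d u m (j+1)) + u * cc d u m j = 0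
      simp [ih (j+1) (by omega), ih j (by omega)]

private theorem cc_diag : ∀ n, cc d u n n = u ^ n := by
  intro n
  induction n with
  | zero => simp [cc]
  | succ m ih =>
    show u * d (cc d u m (m+1)) + u * cc d u m m = u ^ (m+1)
    rw [cc_gt d u m (m+1) (by omega), ih, map_zero, mul_zero, zero_add, pow_succ]
    ring

private theorem cc_one : ∀ n, cc d u (n+1) 1 = (⇑(u • d))^[n] u := by
  intro n
  induction n with
  | zero =>
    show u * d (cc d u 0 1) + u * cc d u 0 0 = u
    show u * d 0 + u * 1 = u
    rw [map_zero, mul_zero, mul_one, zero_add]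
  | succ m ih =>
    show u * d (cc d u (m+1) 1) + u * cc d u (m+1) 0 = _
    rw [cc_zero_right, ih, mul_zero, add_zero, Function.iterate_succ_apply',
      smul_deriv_apply]

private theorem expand : ∀ n x, (⇑(u • d))^[n] x = ∑ i ∈ range (n+1), cc d u n i * d^[i] x := by
  intro n
  induction n with
  | zero => intro x; simp [cc]
  | succ m ih =>
    intro x
    rw [Function.iterate_succ_apply', ih, smul_deriv_apply, map_sum]
    have hterm : ∀ i, d (cc d u m i * d^[i] x)
        = d (cc d u m i) * d^[i] x + cc d u m i * d^[i+1] x := by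
      intro i
      rw [d.leibniz, smul_eq_mul, smul_eq_mul, Function.iterate_succ_apply']
      ring
    rw [Finset.sum_congr rfl (fun i _ => hterm i)]
    have hg0 : d (cc d u m 0) = 0 := by
      cases m with
      | zero => rw [show cc d u 0 0 = (1 : R) from rfl]; exact d.map_one_eq_zero
      | succ t => rw [cc_zero_right]; exact map_zero _
    have hR : ∑ i ∈ range (m+2), cc d u (m+1) i * d^[i] x
        = ∑ i ∈ range (m+1), (u * (d (cc d u m (i+1)) * d^[i+1] x)
            + u * (cc d u m i * d^[i+1] x)) := by
      rw [sum_range_succ' _ (m+1), cc_zero_right]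
      rw [zero_mul, add_zero]
      refine sum_congr rfl fun i _ => ?_
      show (u * d (cc d u m (i+1)) + u * cc d u m i) * d^[i+1] x = _
      ring
    have hL1 : ∑ i ∈ range (m+1), u * (d (cc d u m (i+1)) * d^[i+1] x)
        = ∑ i ∈ range (m+1), u * (d (cc d u m i) * d^[i] x) := by
      have h1 := sum_range_succ' (fun i => u * (d (cc d u m i) * d^[i] x)) (m+1)
      have h2 := sum_range_succ (fun i => u * (d (cc d u m i) * d^[i] x)) (m+1)
      have h3 := h1.symm.trans h2
      simp only [hg0, cc_gt d u m (m+1) (by omega), map_zero, zero_mul, mul_zero,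
        add_zero] at h3
      exact h3
    rw [hR, mul_sum, sum_add_distrib]
    simp_rw [mul_add]
    rw [sum_add_distrib, hL1]

variable (p : ℕ)

private theorem chooseCast (hp : p.Prime) (hpR : (p : R) = 0) (j : ℕ) (h0 : j ≠ 0)
    (hj : j < p) : ((p.choose j : ℕ) : R) = 0 := by
  obtain ⟨m, hm⟩ := hp.dvd_choose_self h0 hj
  rw [hm, Nat.cast_mul, hpR, zero_mul]

private theorem pderiv (hp : p.Prime) (hpR : (p : R) = 0) (e : Derivation k R R) (x y : R) :
    e^[p] (x * y) = e^[p] x * y + x * e^[p] y := by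
  obtain ⟨q, rfl⟩ : ∃ q, p = q + 2 := ⟨p - 2, by have := hp.two_le; omega⟩
  rw [iterLeibniz e _ x y, sum_range_succ, sum_range_succ']
  have hmid : ∀ j ∈ range (q+1),
      (q+2).choose (j+1) • (e^[q+2-(j+1)] x * e^[j+1] y) = 0 := by
    intro j hj
    rw [mem_range] at hj
    rw [nsmul_eq_mul, chooseCast _ hp hpR (j+1) (by omega) (by omega), zero_mul]
  rw [sum_eq_zero hmid, zero_add]
  simp
  try ring

private theorem star (hp : p.Prime) (hpR : (p : R) = 0) (x y : R) :
    ∑ i ∈ range (p+1), cc d u p i *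
      ∑ j ∈ range (i-1), ((i.choose (j+1) : R) * (d^[i-(j+1)] x * d^[j+1] y)) = 0 := by
  have h := pderiv p hp hpR (u • d) x y
  rw [expand d u p (x*y), expand d u p x, expand d u p y] at h
  simp_rw [iterLeibniz d _ x y] at h
  have key : ∀ i ∈ range (p+1),
      cc d u p i * ∑ j ∈ range (i+1), (i.choose j) • (d^[i-j] x * d^[j] y)
        - (cc d u p i * (d^[i] x * y) + cc d u p i * (x * d^[i] y))
      = cc d u p i *
          ∑ j ∈ range (i-1), ((i.choose (j+1) : R) * (d^[i-(j+1)] x * d^[j+1] y)) := by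
    intro i _
    match i with
    | 0 =>
      have h0 : cc d u p 0 = 0 := by
        obtain ⟨t, rfl⟩ : ∃ t, p = t + 1 := ⟨p - 1, by have := hp.pos; omega⟩
        exact cc_zero_right d u t
      simp [h0]
    | i+1 =>
      rw [sum_range_succ, sum_range_succ']
      simp only [Nat.choose_zero_right, Nat.choose_self, one_smul, Nat.sub_zero,
        Nat.sub_self, Function.iterate_zero_apply, Nat.succ_sub_one]
      simp_rw [nsmul_eq_mul]
      ring
  rw [← sum_congr rfl key, sum_sub_distrib, sub_eq_zero, h, sum_add_distrib,
    sum_mul, mul_sum]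
  congr 1
  · exact sum_congr rfl fun i _ => by ring
  · exact sum_congr rfl fun i _ => by ring

end Helpers

section Poly

variable {k : Type*} [CommRing k] {A : Type*} [CommRing A] [Algebra k A]

private noncomputable def dC (D : Derivation k A A) : Derivation k A[X] A[X] :=
  PolynomialModule.equivPolynomialSelf.compDer D.mapCoeffs

private theorem coeff_dC (D : Derivation k A A) (f : A[X]) (i : ℕ) :
    (dC D f).coeff i = D (f.coeff i) := rfl

private noncomputable def dB (D : Derivation k A A) : Derivation k A[X] A[X] :=
  dC D + (derivative'.restrictScalars k)

private theorem dB_C (D : Derivation k A A) (x : A) : dB D (C x) = C (D x) := by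
  show dC D (C x) + derivative (C x) = C (D x)
  rw [derivative_C, add_zero]
  ext n
  rw [coeff_dC]
  rcases eq_or_ne n 0 with h | h
  · simp [h]
  · simp [coeff_C, h]

private theorem dB_X (D : Derivation k A A) : dB D X = 1 := by
  show dC D X + derivative X = 1
  rw [derivative_X]
  have : dC D X = 0 := by
    ext n
    rw [coeff_dC]
    rcases eq_or_ne n 1 with h | h
    · simp [h, coeff_X]
    · simp [coeff_X, h, Ne.symm h]
  rw [this, zero_add]

private theorem dB_Xpow (D : Derivation k A A) (n : ℕ) :
    dB D (X ^ n : A[X]) = n • X ^ (n - 1) := by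
  rw [Derivation.leibniz_pow, dB_X, smul_eq_mul, mul_one]

private theorem dB_iter_Xpow (D : Derivation k A A) (s r : ℕ) :
    (⇑(dB D))^[s] (X ^ r : A[X]) = (r.descFactorial s) • X ^ (r - s) := by
  induction s with
  | zero => simp
  | succ m ih =>
    rw [Function.iterate_succ_apply', ih, map_nsmul, dB_Xpow, smul_smul,
      Nat.sub_sub, Nat.descFactorial_succ, Nat.mul_comm]

private theorem dB_iter_C (D : Derivation k A A) (m : ℕ) (x : A) :
    (⇑(dB D))^[m] (C x : A[X]) = C (D^[m] x) := by
  induction m with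
  | zero => simp
  | succ m ih => rw [Function.iterate_succ_apply', ih, dB_C, Function.iterate_succ_apply']

private theorem ccB (D : Derivation k A A) (a : A) :
    ∀ n i, cc (dB D) (C a : A[X]) n i = C (cc D a n i) := by
  intro n
  induction n with
  | zero =>
    intro i
    match i with
    | 0 => show (1 : A[X]) = C 1; rw [map_one]
    | i+1 => show (0 : A[X]) = C 0; rw [map_zero]
  | succ m ih =>
    intro i
    match i with
    | 0 =>
      show C a * dB D (cc (dB D) (C a) m 0) = C (a * D (cc D a m 0))
      rw [ih 0, dB_C, map_mul]
    | i+1 =>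
      show C a * dB D (cc (dB D) (C a) m (i+1)) + C a * cc (dB D) (C a) m i
          = C (a * D (cc D a m (i+1)) + a * cc D a m i)
      rw [ih (i+1), ih i, dB_C, map_add, map_mul, map_mul]

private theorem coeffterm (D : Derivation k A A) (r : ℕ) (hr1 : 1 ≤ r) (x₀ : A)
    (i j : ℕ) :
    Polynomial.coeff ((↑(i.choose (j+1)) : A[X]) *
        ((⇑(dB D))^[i-(j+1)] (C x₀) * (⇑(dB D))^[j+1] (X ^ r : A[X]))) 0
    = if j = r - 1 then ((i.choose r * r.factorial : ℕ) : A) * D^[i-r] x₀ else 0 := by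
  rw [dB_iter_C, dB_iter_Xpow]
  rw [show ((i.choose (j+1) : ℕ) : A[X]) = C ((i.choose (j+1) : ℕ) : A) from
    (map_natCast (C : A →+* A[X]) _).symm]
  rw [nsmul_eq_mul,
    show ((r.descFactorial (j+1) : ℕ) : A[X]) = C ((r.descFactorial (j+1) : ℕ) : A) from
    (map_natCast (C : A →+* A[X]) _).symm]
  rw [coeff_C_mul, coeff_C_mul, coeff_C_mul, coeff_X_pow]
  rcases lt_trichotomy (j+1) r with h | h | h
  · rw [if_neg (by omega), if_neg (by omega)]
    ring
  · rw [if_pos (by omega), if_pos (by omega)]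
    have e1 : i - (j+1) = i - r := by omega
    have e2 : j + 1 = r := h
    rw [e1, e2, Nat.descFactorial_self, Nat.cast_mul]
    ring
  · rw [Nat.descFactorial_eq_zero_iff_lt.mpr (by omega),
      if_neg (show ¬ j = r - 1 by omega)]
    push_cast
    ring

private theorem Er (p : ℕ) (hp : p.Prime) (hpA : ((p : ℕ) : A) = 0)
    (D : Derivation k A A) (a : A) (r : ℕ) (hr1 : 1 ≤ r) (x₀ : A) :
    ∑ i ∈ range (p+1), cc D a p i *
      (if r - 1 ∈ range (i-1) then ((i.choose r * r.factorial : ℕ) : A) * D^[i-r] x₀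
        else 0) = 0 := by
  have hpB : ((p : ℕ) : A[X]) = 0 := by
    rw [← map_natCast (C : A →+* A[X]) p, hpA, map_zero]
  have h := star (dB D) (C a : A[X]) p hp hpB (C x₀) (X ^ r : A[X])
  have h0 := congrArg (fun q : A[X] => q.coeff 0) h
  simp only [coeff_zero, finset_sum_coeff] at h0
  refine Eq.trans (Finset.sum_congr rfl fun i _ => ?_) h0
  symm
  rw [ccB, coeff_C_mul, finset_sum_coeff]
  congr 1
  rw [Finset.sum_congr rfl (fun j _ => coeffterm D r hr1 x₀ i j),
    Finset.sum_ite_eq' (range (i-1)) (r-1)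
      (fun _ => ((i.choose r * r.factorial : ℕ) : A) * D^[i-r] x₀)]

end Poly

section Main

variable {k : Type*} [Field k] {p : ℕ} {A : Type*} [CommRing A] [Algebra k A]

private theorem midvanish (hp : p.Prime) [CharP k p] (D : Derivation k A A) (a : A) :
    ∀ s, 1 ≤ s → ∀ i, i + s = p → 2 ≤ i → ∀ x, cc D a p i * D x = 0 := by
  have hpA : ((p : ℕ) : A) = 0 := by
    rw [← map_natCast (algebraMap k A) p, CharP.cast_eq_zero k p, map_zero]
  intro s
  induction s using Nat.strong_induction_on with
  | _ s IH =>
    intro hs i hip hi2 x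
    obtain ⟨m, rfl⟩ : ∃ m, i = m + 2 := ⟨i - 2, by omega⟩
    have hE := Er p hp hpA D a (m+1) (by omega) x
    rw [Finset.sum_eq_single (m+2)] at hE
    · rw [if_pos (mem_range.mpr (by omega))] at hE
      have e1 : m + 2 - (m + 1) = 1 := by omega
      rw [e1] at hE
      have e3 : (m+2).choose (m+1) * (m+1).factorial = (m+2).factorial := by
        rw [Nat.choose_succ_self_right, ← Nat.factorial_succ]
      rw [e3, Function.iterate_one] at hE
      have hfac : (((m+2).factorial : ℕ) : k) ≠ 0 := by
        rw [Ne, CharP.cast_eq_zero_iff k p _]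
        intro hdvd
        have := (Nat.Prime.dvd_factorial hp).mp hdvd
        omega
      have hsm : ((m+2).factorial : k) • (cc D a p (m+2) * D x) = 0 := by
        rw [Algebra.smul_def, map_natCast]
        linear_combination hE
      calc cc D a p (m+2) * D x
          = ((m+2).factorial : k)⁻¹ • (((m+2).factorial : k) • (cc D a p (m+2) * D x)) :=
            (inv_smul_smul₀ hfac _).symm
        _ = 0 := by rw [hsm, smul_zero]
    · intro b hb hbne
      rw [mem_range] at hb
      by_cases hble : b ≤ m + 1
      · rw [if_neg (by simp only [mem_range]; omega), mul_zero]
      · rw [if_pos (mem_range.mpr (by omega))]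
        by_cases hbp : b = p
        · subst hbp
          rw [Nat.cast_mul, chooseCast _ hp hpA (m+1) (by omega) (by omega), zero_mul,
            zero_mul, mul_zero]
        · have hb2 : m + 2 < b := by omega
          have hbl : b < p := by omega
          have hDz : cc D a p b * D (D^[b-(m+1)-1] x) = 0 :=
            IH (p - b) (by omega) (by omega) b (by omega) (by omega) _
          have : (⇑D)^[b-(m+1)] x = D (D^[b-(m+1)-1] x) := by
            conv_lhs => rw [show b-(m+1) = (b-(m+1)-1)+1 by omega]
            rw [Function.iterate_succ_apply']
          rw [this, mul_left_comm, hDz, mul_zero]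
    · intro hnot
      exact absurd (mem_range.mpr (by omega)) hnot

end Main

/-- Hochschild's identity for derivations in characteristic `p ≥ 3`:
`(aD)^p = a^p D^p + ((aD)^{p-1}(a)) D` as `k`-linear endomorphisms of `A`. -/
theorem stmt15 {k : Type*} [Field k] {p : ℕ} (hp : p.Prime) (hp3 : 3 ≤ p) [CharP k p]
    {A : Type*} [CommRing A] [Algebra k A]
    (a : A) (D : Derivation k A A) :
    ∀ b : A, (fun x => a * D x)^[p] b =
      a ^ p * (⇑D)^[p] b + (fun x => a * D x)^[p - 1] a * D b := by
  intro b
  have hfun : (fun x => a * D x) = ⇑(a • D) := funext fun x => (smul_deriv_apply D a x).symm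
  rw [hfun]
  rw [expand D a p b]
  obtain ⟨q, hq⟩ : ∃ q, p = q + 3 := ⟨p - 3, by omega⟩
  subst hq
  rw [sum_range_succ, sum_range_succ', sum_range_succ']
  have hmid : ∀ i ∈ range (q+1), cc D a (q+3) (i+1+1) * (⇑D)^[i+1+1] b = 0 := by
    intro i hi
    rw [mem_range] at hi
    rw [Function.iterate_succ_apply']
    exact midvanish hp D a ((q+3) - (i+2)) (by omega) (i+2) (by omega) (by omega) _
  rw [sum_eq_zero hmid]
  have h0 : cc D a (q+3) 0 = 0 := cc_zero_right D a (q+2)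
  have h1 : cc D a (q+3) 1 = (⇑(a • D))^[q+2] a := cc_one D a (q+2)
  have hd : cc D a (q+3) (q+3) = a ^ (q+3) := cc_diag D a (q+3)
  rw [h0, h1, hd]
  have : q + 3 - 1 = q + 2 := by omega
  rw [this]
  simp only [Function.iterate_one, zero_mul, add_zero, zero_add,
    Function.iterate_zero_apply]
  ring
end
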